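/- arXiv:2005.05444 — 8 statements merged into one kernel-verified Lean document; each statement's English description precedes it below -/
import Mathlib

section
/- Let k ≥ 2 be an integer, r ∈ (0,1), and x ∈ [1/k, 1]. For every probability distribution P = (p_1,…,p_k) on [k] with H(P) = H(Q_x), one has Σ_{i=1}^k p_i^r ≤ x^r + (k−1)·((1−x)/(k−1))^r. Moreover, equality holds only if P equals Q_x up to a permutation of the coordinates. -/
open scoped BigOperators

/-- Shannon entropy of a distribution on `[k]` (natural logarithm, `0·log 0 = 0`). -/
noncomputable def shannonEnt (k : ℕ) (P : Fin k → ℝ) : ℝ :=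
  -∑ i, P i * Real.log (P i)

/-- The distribution `Q_x = (x, (1-x)/(k-1), …, (1-x)/(k-1))` on `[k]`. -/
noncomputable def Qdist (k : ℕ) (x : ℝ) : Fin k → ℝ :=
  fun i => if (i : ℕ) = 0 then x else (1 - x) / ((k : ℝ) - 1)

/-!
Put `y = (1 - x) / (k - 1)`. The entropy constraint forces `P i ≤ x` for all `i`: with one
coordinate fixed to `p`, Jensen bounds the entropy by `H(Q_p)`, which decreases on `[1/k, 1]`.
At the endpoints this already makes `P` take only the values `x` and `y`: for `x = 1/k` since
`∑ P i = 1 = k x`, for `x = 1` since the entropy vanishes.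

For `1/k < x < 1` we use Lagrange multipliers: there are `l, m` such that
`ψ t = t ^ r + l t log t - m t` has a critical point at `y` and `ψ x = ψ y`. Then `l > 0` and
`ψ` is concave up to its inflection point `c > y` and convex beyond it, so `ψ t < ψ x` for
`t ∈ [0, x] \ {y, x}`. Summing `ψ (P i) ≤ ψ x` and using `∑ P i = ∑ Q_x i` and
`∑ P i log P i = ∑ Q_x i log Q_x i` gives the inequality, with equality only if every
`P i ∈ {x, y}`; counting then shows that exactly one coordinate equals `x`.
-/

open Real Set Finset

/-- The Lagrangian `ψ` of maximizing `∑ pᵢ ^ r`, with multipliers `l` for `∑ pᵢ log pᵢ`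
and `m` for `∑ pᵢ`. -/
noncomputable def rpowLagrangian (r l m t : ℝ) : ℝ := t ^ r + l * (t * log t) - m * t

noncomputable def rpowLagrangianDeriv (r l m t : ℝ) : ℝ := r * t ^ (r - 1) + l * (log t + 1) - m

section Lagrangian

variable {r l m : ℝ}

theorem continuous_rpowLagrangian (hr : 0 < r) : Continuous (rpowLagrangian r l m) :=
  ((continuous_rpow_const hr.le).add (continuous_mul_log.const_smul l)).sub
    (continuous_const.mul continuous_id)

theorem hasDerivAt_rpowLagrangian {t : ℝ} (ht : 0 < t) :
    HasDerivAt (rpowLagrangian r l m) (rpowLagrangianDeriv r l m t) t := by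
  have h := ((hasDerivAt_rpow_const (p := r) (Or.inl ht.ne')).fun_add
    ((hasDerivAt_mul_log ht.ne').const_mul l)).fun_sub ((hasDerivAt_id t).const_mul m)
  rwa [mul_one] at h

theorem hasDerivAt_rpowLagrangianDeriv {t : ℝ} (ht : 0 < t) :
    HasDerivAt (rpowLagrangianDeriv r l m) ((l - r * (1 - r) * t ^ (r - 1)) / t) t := by
  have h := (((hasDerivAt_rpow_const (p := r - 1) (Or.inl ht.ne')).const_mul r).fun_add
    (((hasDerivAt_log ht.ne').add_const 1).const_mul l)).sub_const m
  refine h.congr_deriv ?_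
  rw [rpow_sub_one ht.ne' (r - 1)]
  field_simp
  ring

theorem strictAntiOn_rpowLagrangianDeriv (hr0 : 0 < r) (hr1 : r < 1) {c : ℝ}
    (hl : l = r * (1 - r) * c ^ (r - 1)) :
    StrictAntiOn (rpowLagrangianDeriv r l m) (Ioc 0 c) := by
  refine strictAntiOn_of_deriv_neg (convex_Ioc 0 c)
    (fun t ht ↦ (hasDerivAt_rpowLagrangianDeriv ht.1).continuousAt.continuousWithinAt)
    fun t ht ↦ ?_
  rw [interior_Ioc] at ht
  rw [(hasDerivAt_rpowLagrangianDeriv ht.1).deriv, hl]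
  have := rpow_lt_rpow_of_neg ht.1 ht.2 (by linarith : r - 1 < 0)
  exact div_neg_of_neg_of_pos (by nlinarith [mul_pos hr0 (sub_pos.2 hr1)]) ht.1

theorem strictConvexOn_rpowLagrangian (hr0 : 0 < r) (hr1 : r < 1) {c : ℝ} (hc : 0 < c)
    (hl : l = r * (1 - r) * c ^ (r - 1)) :
    StrictConvexOn ℝ (Ici c) (rpowLagrangian r l m) := by
  have hderiv : StrictMonoOn (rpowLagrangianDeriv r l m) (Ici c) := by
    refine strictMonoOn_of_deriv_pos (convex_Ici c) (fun t ht ↦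
      (hasDerivAt_rpowLagrangianDeriv (hc.trans_le ht)).continuousAt.continuousWithinAt)
      fun t ht ↦ ?_
    rw [interior_Ici] at ht
    rw [(hasDerivAt_rpowLagrangianDeriv (hc.trans ht)).deriv, hl]
    have := rpow_lt_rpow_of_neg hc ht (by linarith : r - 1 < 0)
    exact div_pos (by nlinarith [mul_pos hr0 (sub_pos.2 hr1)]) (hc.trans ht)
  refine StrictMonoOn.strictConvexOn_of_deriv (convex_Ici c)
    (continuous_rpowLagrangian hr0).continuousOn ?_
  rw [interior_Ici]
  exact (hderiv.mono Ioi_subset_Ici_self).congr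
    fun t ht ↦ (hasDerivAt_rpowLagrangian (hc.trans ht)).deriv.symm

/-- `ψ` is concave on `[0, c]` and convex on `[c, ∞)`: its critical point `y < c` is the strict
maximum on `[0, c]`, and on `[c, x]` convexity bounds `ψ` by `max (ψ c) (ψ x) = ψ x`. -/
theorem rpowLagrangian_lt (hr0 : 0 < r) (hr1 : r < 1) {c x y t : ℝ} (hy : 0 < y) (hyc : y < c)
    (hl : l = r * (1 - r) * c ^ (r - 1)) (hy' : rpowLagrangianDeriv r l m y = 0)
    (hxy : rpowLagrangian r l m x = rpowLagrangian r l m y)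
    (ht0 : 0 ≤ t) (htx : t ≤ x) (hty : t ≠ y) (htx' : t ≠ x) :
    rpowLagrangian r l m t < rpowLagrangian r l m x := by
  set ψ := rpowLagrangian r l m
  have hcont {s : Set ℝ} : ContinuousOn ψ s := (continuous_rpowLagrangian hr0).continuousOn
  have hanti := strictAntiOn_rpowLagrangianDeriv hr0 hr1 hl (m := m)
  have hinc : StrictMonoOn ψ (Icc 0 y) := by
    refine strictMonoOn_of_deriv_pos (convex_Icc 0 y) hcont fun s hs ↦ ?_
    rw [interior_Icc] at hs
    rw [(hasDerivAt_rpowLagrangian hs.1).deriv, ← hy']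
    exact hanti ⟨hs.1, hs.2.le.trans hyc.le⟩ ⟨hy, hyc.le⟩ hs.2
  have hdec : StrictAntiOn ψ (Icc y c) := by
    refine strictAntiOn_of_deriv_neg (convex_Icc y c) hcont fun s hs ↦ ?_
    rw [interior_Icc] at hs
    rw [(hasDerivAt_rpowLagrangian (hy.trans hs.1)).deriv, ← hy']
    exact hanti ⟨hy, hyc.le⟩ ⟨hy.trans hs.1, hs.2.le⟩ hs.1
  rcases hty.lt_or_gt with hty | hty
  · rw [hxy]
    exact hinc ⟨ht0, hty.le⟩ ⟨hy.le, le_rfl⟩ hty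
  rcases le_or_gt t c with htc | hct
  · rw [hxy]
    exact hdec ⟨le_rfl, hyc.le⟩ ⟨hty.le, htc⟩ hty
  have hcx : ψ c < ψ x := hxy ▸ hdec ⟨le_rfl, hyc.le⟩ ⟨hyc.le, le_rfl⟩ hyc
  have hxc : c < x := hct.trans (htx.lt_of_ne htx')
  calc ψ t < max (ψ c) (ψ x) :=
        (strictConvexOn_rpowLagrangian hr0 hr1 (hy.trans hyc) hl).lt_on_openSegment
          self_mem_Ici hxc.le hxc.ne
          (by rw [openSegment_eq_Ioo hxc]; exact ⟨hct, htx.lt_of_ne htx'⟩)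
    _ = ψ x := max_eq_right hcx.le

end Lagrangian

section Inequalities

variable {r x y : ℝ}

theorem sub_lt_mul_log_sub_log (hy : 0 < y) (hxy : y < x) : x - y < x * (log x - log y) := by
  have hx : 0 < x := hy.trans hxy
  have h := log_lt_sub_one_of_pos (div_pos hy hx) (div_lt_one hx |>.2 hxy).ne
  rw [log_div hy.ne' hx.ne', lt_sub_iff_add_lt, lt_div_iff₀ hx] at h
  linarith

theorem rpow_lt_rpow_add_mul_sub (hr0 : 0 < r) (hr1 : r < 1) (hy : 0 < y) (hx : 0 ≤ x)
    (hxy : x ≠ y) : x ^ r < y ^ r + r * y ^ (r - 1) * (x - y) := by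
  have h := rpow_one_add_lt_one_add_mul_self (s := x / y - 1) (by linarith [div_nonneg hx hy.le])
    (sub_ne_zero.2 (div_ne_one_of_ne hxy)) hr0 hr1
  rw [add_sub_cancel, div_rpow hx hy.le, div_lt_iff₀ (rpow_pos_of_pos hy r)] at h
  rw [rpow_sub_one hy.ne']
  calc x ^ r < (1 + r * (x / y - 1)) * y ^ r := h
    _ = y ^ r + r * (y ^ r / y) * (x - y) := by field_simp

theorem rpow_tangent_gap_lt (hr0 : 0 < r) (hr1 : r < 1) (hy : 0 < y) (hyx : y < x) :
    y ^ r + r * y ^ (r - 1) * (x - y) - x ^ r <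
      r * (1 - r) * y ^ (r - 1) * (x * (log x - log y) - (x - y)) := by
  set K := r * (1 - r) * y ^ (r - 1)
  let M : ℝ → ℝ := fun u ↦
    K * (u * (log u - log y) - (u - y)) - (y ^ r + r * y ^ (r - 1) * (u - y) - u ^ r)
  have hM : ∀ u, 0 < u →
      HasDerivAt M (K * (log u - log y) - r * y ^ (r - 1) + r * u ^ (r - 1)) u := by
    intro u hu
    have hD := (((hasDerivAt_mul_log hu.ne').fun_sub
      ((hasDerivAt_id u).mul_const (log y))).fun_sub ((hasDerivAt_id u).sub_const y)).const_mul K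
    have hN := ((((hasDerivAt_id u).sub_const y).const_mul (r * y ^ (r - 1))).const_add
      (y ^ r)).fun_sub (hasDerivAt_rpow_const (p := r) (Or.inl hu.ne'))
    refine (hD.fun_sub hN).congr_of_eventuallyEq ?_ |>.congr_deriv ?_
    · exact Filter.Eventually.of_forall fun v ↦ by simp only [M, id]; ring
    · ring
  -- `u ^ (r - 1) = y ^ (r - 1) exp (-(1 - r) L) > y ^ (r - 1) (1 - (1 - r) L)`, `L = log (u / y)`
  have hM' : ∀ u, y < u → 0 < K * (log u - log y) - r * y ^ (r - 1) + r * u ^ (r - 1) := by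
    intro u hu
    have hu0 : 0 < u := hy.trans hu
    have hL : 0 < log u - log y := sub_pos.2 (log_lt_log hy hu)
    have hexp : u ^ (r - 1) = y ^ (r - 1) * exp ((log u - log y) * (r - 1)) := by
      rw [← log_div hu0.ne' hy.ne', ← rpow_def_of_pos (div_pos hu0 hy), div_rpow hu0.le hy.le]
      field_simp
    have := add_one_lt_exp (x := (log u - log y) * (r - 1)) (by nlinarith)
    rw [hexp]
    calc 0 < r * y ^ (r - 1) *
          ((1 - r) * (log u - log y) - 1 + exp ((log u - log y) * (r - 1))) :=
          mul_pos (mul_pos hr0 (rpow_pos_of_pos hy _)) (by nlinarith)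
      _ = _ := by ring
  have hmono : StrictMonoOn M (Icc y x) :=
    strictMonoOn_of_deriv_pos (convex_Icc y x)
      (fun u hu ↦ (hM u (hy.trans_le hu.1)).continuousAt.continuousWithinAt) fun u hu ↦ by
        rw [interior_Icc] at hu
        rw [(hM u (hy.trans hu.1)).deriv]
        exact hM' u hu.1
  have := hmono (left_mem_Icc.2 hyx.le) (right_mem_Icc.2 hyx.le) hyx
  simp only [M, sub_self, mul_zero, add_zero] at this
  linarith

end Inequalities

theorem exists_rpowLagrangian_eq {r x y : ℝ} (hr0 : 0 < r) (hr1 : r < 1) (hy : 0 < y)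
    (hyx : y < x) :
    ∃ l m c, y < c ∧ l = r * (1 - r) * c ^ (r - 1) ∧ rpowLagrangianDeriv r l m y = 0 ∧
      rpowLagrangian r l m x = rpowLagrangian r l m y := by
  -- Once `ψ' y = 0`, `ψ x - ψ y = l * D - N`; the inflection point `c` solves
  -- `r (1 - r) c ^ (r - 1) = l`, and `y < c` is `rpow_tangent_gap_lt`.
  set D := x * (log x - log y) - (x - y)
  set N := y ^ r + r * y ^ (r - 1) * (x - y) - x ^ r
  have hD : 0 < D := sub_pos.2 (sub_lt_mul_log_sub_log hy hyx)
  have hN : 0 < N := sub_pos.2 (rpow_lt_rpow_add_mul_sub hr0 hr1 hy (hy.trans hyx).le hyx.ne')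
  have hr : 0 < r * (1 - r) := mul_pos hr0 (sub_pos.2 hr1)
  have hl : 0 < N / D / (r * (1 - r)) := by positivity
  refine ⟨N / D, r * y ^ (r - 1) + N / D * (log y + 1), (N / D / (r * (1 - r))) ^ (r - 1)⁻¹,
    ?_, ?_, ?_, ?_⟩
  · rw [lt_rpow_inv_iff_of_neg hy hl (by linarith), div_lt_iff₀ hr, div_lt_iff₀ hD]
    linarith [rpow_tangent_gap_lt hr0 hr1 hy hyx]
  · rw [rpow_inv_rpow hl.le (by linarith)]
    field_simp [(sub_pos.2 hr1).ne']
  · simp only [rpowLagrangianDeriv]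
    ring
  · have hND : N / D * D = N := div_mul_cancel₀ N hD.ne'
    simp only [D, N, rpowLagrangian] at hND ⊢
    linear_combination hND

theorem sum_le_of_lagrangian_le {ι : Type*} [Fintype ι] (f g : ℝ → ℝ) {l m c : ℝ}
    {P Q : ι → ℝ}
    (hP : ∀ i, f (P i) + l * g (P i) - m * P i ≤ c)
    (hQ : ∀ i, f (Q i) + l * g (Q i) - m * Q i = c)
    (hsum : ∑ i, P i = ∑ i, Q i) (hg : ∑ i, g (P i) = ∑ i, g (Q i)) :
    ∑ i, f (P i) ≤ ∑ i, f (Q i) ∧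
      (∑ i, f (P i) = ∑ i, f (Q i) → ∀ i, f (P i) + l * g (P i) - m * P i = c) := by
  have key : ∑ i, f (P i) - ∑ i, f (Q i) = ∑ i, (f (P i) + l * g (P i) - m * P i - c) := by
    conv_rhs => enter [2, i]; rw [← hQ i]
    simp only [sum_sub_distrib, sum_add_distrib, ← mul_sum, hsum, hg]
    ring
  have hnonpos : ∀ i ∈ Finset.univ, f (P i) + l * g (P i) - m * P i - c ≤ 0 :=
    fun i _ ↦ sub_nonpos.2 (hP i)
  refine ⟨sub_nonpos.1 (key ▸ sum_nonpos hnonpos), fun heq i ↦ ?_⟩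
  rw [← sub_eq_zero, key, sum_eq_zero_iff_of_nonpos hnonpos] at heq
  exact sub_eq_zero.1 (heq i (mem_univ i))

theorem sum_rpow_le_of_sum_mul_log_eq {ι : Type*} [Fintype ι] {r x y : ℝ} (hr0 : 0 < r)
    (hr1 : r < 1) (hy : 0 < y) (hyx : y < x) {P Q : ι → ℝ} (hP0 : ∀ i, 0 ≤ P i)
    (hPx : ∀ i, P i ≤ x) (hQ : ∀ i, Q i = x ∨ Q i = y) (hsum : ∑ i, P i = ∑ i, Q i)
    (hlog : ∑ i, P i * log (P i) = ∑ i, Q i * log (Q i)) :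
    ∑ i, P i ^ r ≤ ∑ i, Q i ^ r ∧
      (∑ i, P i ^ r = ∑ i, Q i ^ r → ∀ i, P i = x ∨ P i = y) := by
  obtain ⟨l, m, c, hyc, hl, hy', hxy⟩ := exists_rpowLagrangian_eq hr0 hr1 hy hyx
  have hlt {t : ℝ} (ht0 : 0 ≤ t) (htx : t ≤ x) (hty : t ≠ y) (htx' : t ≠ x) :=
    rpowLagrangian_lt hr0 hr1 hy hyc hl hy' hxy ht0 htx hty htx'
  have hP : ∀ i, rpowLagrangian r l m (P i) ≤ rpowLagrangian r l m x := fun i ↦ by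
    by_cases hi : P i = y
    · rw [hi, hxy]
    by_cases hi' : P i = x
    · rw [hi']
    exact (hlt (hP0 i) (hPx i) hi hi').le
  have hQ' : ∀ i, rpowLagrangian r l m (Q i) = rpowLagrangian r l m x := fun i ↦ by
    rcases hQ i with hi | hi <;> rw [hi, hxy]
  obtain ⟨hle, heq⟩ := sum_le_of_lagrangian_le (· ^ r) (fun t ↦ t * log t) hP hQ' hsum hlog
  refine ⟨hle, fun h i ↦ ?_⟩
  by_contra! hi
  exact (hlt (hP0 i) (hPx i) hi.2 hi.1).ne (heq h i)

section Qdist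

variable {k : ℕ}

theorem cast_sub_one_pos (hk : 2 ≤ k) : (0 : ℝ) < (k : ℝ) - 1 := by
  have : (2 : ℝ) ≤ k := by exact_mod_cast hk
  linarith

theorem one_sub_div_lt_of_one_div_lt (hk : 2 ≤ k) {x : ℝ} (hx : 1 / (k : ℝ) < x) :
    (1 - x) / ((k : ℝ) - 1) < x := by
  rw [div_lt_iff₀ (cast_sub_one_pos hk)]
  have := (div_lt_iff₀ (by positivity : (0 : ℝ) < k)).1 hx
  linarith

theorem sum_Qdist (hk : 1 ≤ k) (x : ℝ) (f : ℝ → ℝ) :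
    ∑ i, f (Qdist k x i) = f x + ((k : ℝ) - 1) * f ((1 - x) / ((k : ℝ) - 1)) := by
  obtain ⟨n, rfl⟩ := Nat.exists_eq_add_of_le' hk
  simp [Fin.sum_univ_succ, Qdist]

theorem sum_Qdist_eq_one (hk : 2 ≤ k) (x : ℝ) : ∑ i, Qdist k x i = 1 := by
  have h := sum_Qdist (by omega : 1 ≤ k) x id
  simp only [id] at h
  rw [h]
  field_simp [(cast_sub_one_pos hk).ne']
  ring

theorem Qdist_eq_or (x : ℝ) (i : Fin k) :
    Qdist k x i = x ∨ Qdist k x i = (1 - x) / ((k : ℝ) - 1) := by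
  unfold Qdist
  split_ifs <;> simp

theorem Qdist_comp_swap [NeZero k] (x : ℝ) (i₀ : Fin k) :
    Qdist k x ∘ Equiv.swap i₀ 0 =
      fun j ↦ if j = i₀ then x else (1 - x) / ((k : ℝ) - 1) := by
  funext j
  simp [Qdist, Fin.val_eq_zero_iff, Equiv.swap_apply_eq_iff]

theorem exists_perm_eq_Qdist (hk : 2 ≤ k) {x : ℝ} {P : Fin k → ℝ} (hP1 : ∑ i, P i = 1)
    (hP : ∀ i, P i = x ∨ P i = (1 - x) / ((k : ℝ) - 1)) :
    ∃ σ : Equiv.Perm (Fin k), P = Qdist k x ∘ σ := by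
  have : NeZero k := ⟨by omega⟩
  set y := (1 - x) / ((k : ℝ) - 1)
  by_cases hxy : x = y
  · refine ⟨1, funext fun j ↦ ?_⟩
    rw [Equiv.Perm.coe_one, Function.comp_id, (hP j).elim id (·.trans hxy.symm),
      (Qdist_eq_or x j).elim id (·.trans hxy.symm)]
  obtain ⟨i₀, hi₀⟩ : ∃ i₀, ∀ j, P j = x ↔ j = i₀ := by
    have hcount : (#{j | P j = x} : ℝ) * (x - y) = 1 * (x - y) := by
      calc (#{j | P j = x} : ℝ) * (x - y) = ∑ j, (P j - y) := by
            rw [← nsmul_eq_mul, ← sum_const, sum_filter]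
            refine sum_congr rfl fun j _ ↦ ?_
            rcases hP j with h | h <;> simp [h, Ne.symm hxy]
        _ = 1 * (x - y) := by
            rw [sum_sub_distrib, hP1, sum_const, card_univ, Fintype.card_fin, nsmul_eq_mul]
            simp only [y]
            field_simp [(cast_sub_one_pos hk).ne']
            ring
    obtain ⟨i₀, hi₀⟩ :=
      card_eq_one.1 (by exact_mod_cast mul_right_cancel₀ (sub_ne_zero.2 hxy) hcount)
    exact ⟨i₀, fun j ↦ by simpa using Finset.ext_iff.1 hi₀ j⟩
  refine ⟨Equiv.swap i₀ 0, ?_⟩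
  rw [Qdist_comp_swap]
  funext j
  split_ifs with h
  · exact (hi₀ j).2 h
  · exact (hP j).resolve_left (mt (hi₀ j).1 h)

end Qdist

section Entropy

variable {k : ℕ}

theorem shannonEnt_eq_sum_negMulLog (P : Fin k → ℝ) :
    shannonEnt k P = ∑ i, negMulLog (P i) := by
  simp [shannonEnt, negMulLog]

theorem shannonEnt_Qdist (hk : 1 ≤ k) (x : ℝ) :
    shannonEnt k (Qdist k x) =
      negMulLog x + ((k : ℝ) - 1) * negMulLog ((1 - x) / ((k : ℝ) - 1)) := by
  rw [shannonEnt_eq_sum_negMulLog, sum_Qdist hk x negMulLog]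

theorem eq_one_div_of_le_one_div (hk : k ≠ 0) {P : Fin k → ℝ} (hP1 : ∑ i, P i = 1)
    (hP : ∀ i, P i ≤ 1 / k) (i : Fin k) : P i = 1 / k :=
  (sum_eq_sum_iff_of_le fun i _ ↦ hP i).1 (by simp [hP1, hk]) i (mem_univ i)

theorem le_one_of_sum_eq_one {P : Fin k → ℝ} (hP0 : ∀ i, 0 ≤ P i) (hP1 : ∑ i, P i = 1)
    (i : Fin k) : P i ≤ 1 :=
  hP1 ▸ single_le_sum (fun j _ ↦ hP0 j) (mem_univ i)

/-- Jensen's inequality for `negMulLog` on the coordinates other than `i`. -/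
theorem shannonEnt_le_shannonEnt_Qdist (hk : 2 ≤ k) {P : Fin k → ℝ} (hP0 : ∀ i, 0 ≤ P i)
    (hP1 : ∑ i, P i = 1) (i : Fin k) : shannonEnt k P ≤ shannonEnt k (Qdist k (P i)) := by
  have hk1 := cast_sub_one_pos hk
  have hcard : (#(univ.erase i) : ℝ) = (k : ℝ) - 1 := by
    rw [card_erase_of_mem (mem_univ i), card_univ, Fintype.card_fin, Nat.cast_pred (by omega)]
  have hrest : ∑ j ∈ univ.erase i, P j = 1 - P i := by
    rw [← hP1, ← add_sum_erase _ _ (mem_univ i)]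
    ring
  have hjensen := concaveOn_negMulLog.le_map_sum (t := univ.erase i) (p := P)
    (w := fun _ ↦ ((k : ℝ) - 1)⁻¹) (fun _ _ ↦ inv_nonneg.2 hk1.le)
    (by rw [sum_const, nsmul_eq_mul, hcard, mul_inv_cancel₀ hk1.ne'])
    (fun j _ ↦ hP0 j)
  simp only [smul_eq_mul] at hjensen
  rw [← mul_sum, ← mul_sum, hrest, inv_mul_le_iff₀ hk1, ← div_eq_inv_mul] at hjensen
  rw [shannonEnt_eq_sum_negMulLog, shannonEnt_Qdist (by omega),
    ← add_sum_erase _ _ (mem_univ i)]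
  exact (add_le_add_iff_left _).2 hjensen

theorem strictAntiOn_shannonEnt_Qdist (hk : 2 ≤ k) :
    StrictAntiOn (fun x ↦ shannonEnt k (Qdist k x)) (Icc (1 / (k : ℝ)) 1) := by
  have hk1 := cast_sub_one_pos hk
  simp_rw [shannonEnt_Qdist (by omega : 1 ≤ k)]
  refine strictAntiOn_of_deriv_neg (convex_Icc _ _) (by fun_prop) fun x hx ↦ ?_
  rw [interior_Icc] at hx
  have hx0 : 0 < x := lt_trans (by positivity) hx.1
  have hy : 0 < (1 - x) / ((k : ℝ) - 1) := div_pos (sub_pos.2 hx.2) hk1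
  have hyx := one_sub_div_lt_of_one_div_lt hk hx.1
  have hin : HasDerivAt (fun x ↦ (1 - x) / ((k : ℝ) - 1)) (-1 / ((k : ℝ) - 1)) x :=
    ((hasDerivAt_id x).const_sub 1).div_const _
  have hderiv : HasDerivAt
      (fun x ↦ negMulLog x + ((k : ℝ) - 1) * negMulLog ((1 - x) / ((k : ℝ) - 1)))
      (log ((1 - x) / ((k : ℝ) - 1)) - log x) x :=
    ((hasDerivAt_negMulLog hx0.ne').fun_add (((hasDerivAt_negMulLog hy.ne').comp x hin).const_mul
      ((k : ℝ) - 1))).congr_deriv (by field_simp; ring)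
  rw [hderiv.deriv]
  linarith [log_lt_log hy hyx]

theorem le_of_shannonEnt_eq_Qdist (hk : 2 ≤ k) {x : ℝ} (hx : 1 / (k : ℝ) ≤ x)
    {P : Fin k → ℝ} (hP0 : ∀ i, 0 ≤ P i) (hP1 : ∑ i, P i = 1)
    (hH : shannonEnt k P = shannonEnt k (Qdist k x)) (i : Fin k) : P i ≤ x := by
  by_contra! hlt
  have hPi1 := le_one_of_sum_eq_one hP0 hP1 i
  have hanti :=
    strictAntiOn_shannonEnt_Qdist hk ⟨hx, hlt.le.trans hPi1⟩ ⟨hx.trans hlt.le, hPi1⟩ hlt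
  linarith [shannonEnt_le_shannonEnt_Qdist hk hP0 hP1 i]

theorem eq_one_or_eq_zero_of_shannonEnt_eq_zero {P : Fin k → ℝ} (hP0 : ∀ i, 0 ≤ P i)
    (hP1 : ∑ i, P i = 1) (hH : shannonEnt k P = 0) (i : Fin k) : P i = 1 ∨ P i = 0 := by
  rw [shannonEnt_eq_sum_negMulLog, sum_eq_zero_iff_of_nonneg
    fun j _ ↦ negMulLog_nonneg (hP0 j) (le_one_of_sum_eq_one hP0 hP1 j)] at hH
  have hi := hH i (mem_univ i)
  rw [negMulLog, neg_mul, neg_eq_zero, mul_eq_zero, log_eq_zero] at hi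
  have := hP0 i
  rcases hi with h | h | h | h
  all_goals first | exact Or.inr h | exact Or.inl h | linarith

end Entropy

/-- Among all distributions of a given entropy, the two-valued distribution `Q_x`
maximizes `∑ p_i^r`, uniquely up to permutation. -/
theorem sum_rpow_le_of_entropy_eq (k : ℕ) (hk : 2 ≤ k) (r : ℝ) (hr : r ∈ Set.Ioo (0 : ℝ) 1)
    (x : ℝ) (hx : x ∈ Set.Icc (1 / (k : ℝ)) 1)
    (P : Fin k → ℝ) (hP0 : ∀ i, 0 ≤ P i) (hP1 : ∑ i, P i = 1)
    (hH : shannonEnt k P = shannonEnt k (Qdist k x)) :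
    (∑ i, P i ^ r ≤ x ^ r + ((k : ℝ) - 1) * ((1 - x) / ((k : ℝ) - 1)) ^ r) ∧
    (∑ i, P i ^ r = x ^ r + ((k : ℝ) - 1) * ((1 - x) / ((k : ℝ) - 1)) ^ r →
      ∃ σ : Equiv.Perm (Fin k), P = Qdist k x ∘ σ) := by
  obtain ⟨hr0, hr1⟩ := hr
  obtain ⟨hxk, hx1⟩ := hx
  set y := (1 - x) / ((k : ℝ) - 1)
  rw [← sum_Qdist (by omega) x (· ^ r)]
  suffices key : ∑ i, P i ^ r ≤ ∑ i, Qdist k x i ^ r ∧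
      (∑ i, P i ^ r = ∑ i, Qdist k x i ^ r → ∀ i, P i = x ∨ P i = y) from
    ⟨key.1, fun h ↦ exists_perm_eq_Qdist hk hP1 (key.2 h)⟩
  by_cases hdeg : ∀ i, P i = x ∨ P i = y
  · obtain ⟨σ, rfl⟩ := exists_perm_eq_Qdist hk hP1 hdeg
    exact ⟨(Equiv.sum_comp σ (Qdist k x · ^ r)).le, fun _ ↦ hdeg⟩
  have hPx := le_of_shannonEnt_eq_Qdist hk hxk hP0 hP1 hH
  have hxk' : 1 / (k : ℝ) < x := hxk.lt_of_ne fun h ↦ hdeg <| by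
    subst h
    exact fun i ↦ Or.inl (eq_one_div_of_le_one_div (by omega) hP1 hPx i)
  have hx1' : x < 1 := hx1.lt_of_ne fun h ↦ hdeg <| by
    subst h
    simpa [y] using eq_one_or_eq_zero_of_shannonEnt_eq_zero hP0 hP1
      (hH.trans (by simp [shannonEnt_Qdist (by omega : 1 ≤ k)]))
  exact sum_rpow_le_of_sum_mul_log_eq hr0 hr1 (div_pos (sub_pos.2 hx1') (cast_sub_one_pos hk))
    (one_sub_div_lt_of_one_div_lt hk hxk') hP0 hPx (Qdist_eq_or x)
    (by rw [hP1, sum_Qdist_eq_one hk]) (neg_inj.1 hH)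
end

section
/- Let k ≥ 2 be an integer and λ ∈ [−1/(k−1), 1]. Then the input-restricted KL contraction coefficient of the Potts channel at the uniform input satisfies η_KL(PC_λ, π) := sup{ D(PC_λ∘P || π) / D(P || π) : P a probability distribution on [k], P ≠ π } = sup_{x∈(1/k,1]} ψ(λx + (1−λ)/k)/ψ(x). -/
open scoped BigOperators

/-- `ψ(x) = log k + x log x + (1-x) log((1-x)/(k-1))`. -/
noncomputable def psi (k : ℕ) (x : ℝ) : ℝ :=
  Real.log (k : ℝ) + x * Real.log x + (1 - x) * Real.log ((1 - x) / ((k : ℝ) - 1))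

/-- The Potts channel `PC_λ` acting on a distribution on `[k]`. -/
noncomputable def pottsChannel (k : ℕ) (lam : ℝ) (P : Fin k → ℝ) : Fin k → ℝ :=
  fun y => lam * P y + (1 - lam) / (k : ℝ)

/-- KL divergence `D(P‖π)` where `π` is uniform on `[k]`. -/
noncomputable def klUnif (k : ℕ) (P : Fin k → ℝ) : ℝ :=
  ∑ i, P i * Real.log (P i / (1 / (k : ℝ)))

/-!
One inequality is an inclusion: the distribution `Q_x` (mass `x` on one point, the rest spread
evenly) has `D(Q_x‖π) = ψ(x)` and `D(PC_λ ∘ Q_x‖π) = ψ(λx + (1-λ)/k)`.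

For the other, fix `r` above the right-hand supremum and maximise
`D(PC_λ ∘ Q‖π) - r D(Q‖π) = ∑ₘ w(Q m)` over the simplex, where `w(p) = φ(λp + c) - r φ(p)`,
`φ(p) = p log (kp)` and `c = (1-λ)/k`. Since `w` has slope `+∞` at `0`, no coordinate of a
maximiser vanishes, and the Lagrange condition makes `w'` constant on its coordinates. Now `w''`
has the sign of the affine function `λ(λ-r)p - rc`, which is negative at `0`, so `w'` first
decreases and then increases: the maximiser takes at most two values, and the larger one lies
where `w` is strictly convex, so it is taken only once. Hence the maximiser is some `Q_x`, where
the sum is `≤ 0` by the choice of `r`. The right-hand supremum is finite by the data-processing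
inequality.
-/

open Real Set Filter Topology Function

section RealFunctions

theorem lt_and_lt_of_strictAntiOn_of_strictMonoOn {f : ℝ → ℝ} {S : Set ℝ} {p a b : ℝ}
    (hanti : StrictAntiOn f (S ∩ Iic p)) (hmono : StrictMonoOn f (S ∩ Ici p))
    (ha : a ∈ S) (hb : b ∈ S) (hab : a < b) (h : f a = f b) : a < p ∧ p < b := by
  constructor
  · by_contra! hpa
    exact (hmono ⟨ha, hpa⟩ ⟨hb, hpa.trans hab.le⟩ hab).ne h
  · by_contra! hbp
    exact (hanti ⟨ha, hab.le.trans hbp⟩ ⟨hb, hbp⟩ hab).ne' h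

theorem strictConvexOn_of_hasDerivAt {S : Set ℝ} (hSo : IsOpen S) (hS : Convex ℝ S)
    {f f' : ℝ → ℝ} (hf : ∀ p ∈ S, HasDerivAt f (f' p) p) (hmono : StrictMonoOn f' S) :
    StrictConvexOn ℝ S f :=
  StrictMonoOn.strictConvexOn_of_deriv hS (fun p hp => (hf p hp).continuousAt.continuousWithinAt)
    (by rw [hSo.interior_eq]; exact hmono.congr fun p hp => (hf p hp).deriv.symm)

theorem strictAntiOn_and_strictMonoOn_of_hasDerivAt {S : Set ℝ} (hSo : IsOpen S)
    (hS : Convex ℝ S) {f f' : ℝ → ℝ} {p₀ : ℝ} (hf : ∀ p ∈ S, HasDerivAt f (f' p) p)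
    (hneg : ∀ p ∈ S, p < p₀ → f' p < 0) (hpos : ∀ p ∈ S, p₀ < p → 0 < f' p) :
    StrictAntiOn f (S ∩ Iic p₀) ∧ StrictMonoOn f (S ∩ Ici p₀) := by
  have hcont : ContinuousOn f S := fun p hp => (hf p hp).continuousAt.continuousWithinAt
  constructor
  · have hint : interior (S ∩ Iic p₀) = S ∩ Iio p₀ := by
      rw [interior_inter, hSo.interior_eq, interior_Iic]
    refine strictAntiOn_of_hasDerivWithinAt_neg (f' := f') (hS.inter (convex_Iic p₀))
      (hcont.mono inter_subset_left) (fun p hp => ?_) fun p hp => ?_ <;>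
      simp only [hint] at hp ⊢
    exacts [(hf p hp.1).hasDerivWithinAt, hneg p hp.1 hp.2]
  · have hint : interior (S ∩ Ici p₀) = S ∩ Ioi p₀ := by
      rw [interior_inter, hSo.interior_eq, interior_Ici]
    refine strictMonoOn_of_hasDerivWithinAt_pos (f' := f') (hS.inter (convex_Ici p₀))
      (hcont.mono inter_subset_left) (fun p hp => ?_) fun p hp => ?_ <;>
      simp only [hint] at hp ⊢
    exacts [(hf p hp.1).hasDerivWithinAt, hpos p hp.1 hp.2]

theorem exists_sign_change_mul_sub {b : ℝ} (hb : 0 < b) (a : ℝ) :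
    ∃ p₀, ∀ p ∈ Ioo (0 : ℝ) 1, (p < p₀ → a * p - b < 0) ∧ (p₀ < p → 0 < a * p - b) := by
  by_cases ha : 0 < a
  · refine ⟨b / a, fun p _ => ⟨fun h => ?_, fun h => ?_⟩⟩
    · rw [lt_div_iff₀ ha] at h
      linarith
    · rw [div_lt_iff₀ ha] at h
      linarith
  · exact ⟨1, fun p hp => ⟨fun _ => by nlinarith [hp.1], fun h => absurd hp.2 h.not_gt⟩⟩

end RealFunctions

section SeparableMaximum

variable {ι : Type*} [Fintype ι] [DecidableEq ι] {w : ℝ → ℝ} {Q : ι → ℝ} {i j : ι} {t : ℝ}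

theorem sum_comp_update (w : ℝ → ℝ) (Q : ι → ℝ) (i : ι) (a : ℝ) :
    ∑ m, w (update Q i a m) = ∑ m, w (Q m) + (w a - w (Q i)) := by
  have h := Finset.sum_update_of_mem (Finset.mem_univ i) (w ∘ Q) (w a)
  rw [← comp_update] at h
  simp only [comp_apply] at h
  rw [h, ← Finset.add_sum_erase _ _ (Finset.mem_univ i), Finset.sdiff_singleton_eq_erase]
  ring

def transfer (Q : ι → ℝ) (i j : ι) (t : ℝ) : ι → ℝ :=
  update (update Q j (Q j - t)) i (Q i + t)

theorem sum_comp_transfer (w : ℝ → ℝ) (hij : i ≠ j) :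
    ∑ m, w (transfer Q i j t m)
      = ∑ m, w (Q m) + (w (Q i + t) - w (Q i)) + (w (Q j - t) - w (Q j)) := by
  rw [transfer, sum_comp_update, sum_comp_update, update_of_ne hij]
  ring

theorem transfer_mem_stdSimplex (hQ : Q ∈ stdSimplex ℝ ι) (hij : i ≠ j)
    (hi : 0 ≤ Q i + t) (hj : 0 ≤ Q j - t) : transfer Q i j t ∈ stdSimplex ℝ ι := by
  refine ⟨fun m => ?_, ?_⟩
  · simp only [transfer, update_apply]
    split_ifs
    exacts [hi, hj, hQ.1 m]
  · simpa [hQ.2] using sum_comp_transfer (Q := Q) (t := t) id hij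

theorem IsMaxOn.add_le_of_transfer
    (hmax : IsMaxOn (fun Q => ∑ m, w (Q m)) (stdSimplex ℝ ι) Q) (hQ : Q ∈ stdSimplex ℝ ι)
    (hij : i ≠ j) (hi : 0 ≤ Q i + t) (hj : 0 ≤ Q j - t) :
    w (Q i + t) + w (Q j - t) ≤ w (Q i) + w (Q j) := by
  have := hmax (transfer_mem_stdSimplex hQ hij hi hj)
  simp only [Set.mem_ofPred_eq, sum_comp_transfer w hij] at this
  linarith

/-- Moving a little mass `t` onto an empty coordinate gains `t · (+∞)` and loses only `O(t)`. -/
theorem IsMaxOn.pos_of_tendsto_slope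
    (hmax : IsMaxOn (fun Q => ∑ m, w (Q m)) (stdSimplex ℝ ι) Q) (hQ : Q ∈ stdSimplex ℝ ι)
    (hw : Tendsto (slope w 0) (𝓝[>] 0) atTop) (hi : 0 < Q i)
    (hwi : DifferentiableAt ℝ w (Q i)) (j : ι) : 0 < Q j := by
  refine (hQ.1 j).lt_of_ne' fun hj => ?_
  have hij : i ≠ j := by rintro rfl; linarith
  have hshift : HasDerivAt (fun s => w (Q i - s)) (deriv w (Q i) * (-1)) 0 := by
    have : HasDerivAt w (deriv w (Q i)) (Q i - 0) := by rw [sub_zero]; exact hwi.hasDerivAt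
    exact this.comp 0 ((hasDerivAt_id 0).const_sub (Q i))
  have hsum : Tendsto (slope w 0 + slope (fun s => w (Q i - s)) 0) (𝓝[>] 0) atTop :=
    hw.atTop_add ((hasDerivAt_iff_tendsto_slope.mp hshift).mono_left
      (nhdsWithin_mono _ fun _ ht => ne_of_gt ht))
  obtain ⟨t, hgain, ht⟩ := ((hsum.eventually_gt_atTop 0).and
    (Ioo_mem_nhdsGT_of_mem ⟨le_rfl, hi⟩)).exists
  have hle := hmax.add_le_of_transfer hQ hij.symm (by rw [hj]; linarith [ht.1])
    (by linarith [ht.2])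
  rw [hj, zero_add] at hle
  simp only [Pi.add_apply, slope_def_field, sub_zero] at hgain
  rw [← add_div] at hgain
  have := (div_pos_iff_of_pos_right ht.1).mp hgain
  linarith

theorem IsMaxOn.eq_of_hasDerivAt
    (hmax : IsMaxOn (fun Q => ∑ m, w (Q m)) (stdSimplex ℝ ι) Q) (hQ : Q ∈ stdSimplex ℝ ι)
    (hij : i ≠ j) (hi : 0 < Q i) (hj : 0 < Q j) {a b : ℝ}
    (hwi : HasDerivAt w a (Q i)) (hwj : HasDerivAt w b (Q j)) : a = b := by
  have hloc : IsLocalMax (fun t => w (Q i + t) + w (Q j - t)) 0 := by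
    filter_upwards [Ioo_mem_nhds (neg_lt_zero.mpr hi) hj] with t ht
    simpa using hmax.add_le_of_transfer hQ hij (by linarith [ht.1]) (by linarith [ht.2])
  have hwi' : HasDerivAt w a (Q i + 0) := by rwa [add_zero]
  have hwj' : HasDerivAt w b (Q j - 0) := by rwa [sub_zero]
  have hderiv := (hwi'.comp 0 ((hasDerivAt_id 0).const_add (Q i))).add
    (hwj'.comp 0 ((hasDerivAt_id 0).const_sub (Q j)))
  linarith [hloc.hasDerivAt_eq_zero hderiv]

/-- Splitting a common value `q` into `q ± t` gains where `w` is strictly convex. -/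
theorem IsMaxOn.ne_of_strictConvexOn
    (hmax : IsMaxOn (fun Q => ∑ m, w (Q m)) (stdSimplex ℝ ι) Q) (hQ : Q ∈ stdSimplex ℝ ι)
    {S : Set ℝ} (hS : StrictConvexOn ℝ S w) (hij : i ≠ j) (hi : 0 < Q i) (hSi : S ∈ 𝓝 (Q i)) :
    Q i ≠ Q j := by
  intro heq
  obtain ⟨ε, hε, hball⟩ := Metric.mem_nhds_iff.mp hSi
  obtain ⟨t, ht, htm⟩ := exists_between (lt_min hε hi)
  obtain ⟨htε, hti⟩ := lt_min_iff.mp htm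
  have hmem : ∀ s, |s| ≤ t → Q i + s ∈ S := fun s hs => hball <| by
    rw [Metric.mem_ball, Real.dist_eq, add_sub_cancel_left]
    linarith
  have hlt := hS.2 (hmem t (abs_of_pos ht).le) (hmem (-t) (by rw [abs_neg, abs_of_pos ht]))
    (by linarith) one_half_pos one_half_pos (add_halves 1)
  have hle := hmax.add_le_of_transfer (t := t) hQ hij (by linarith) (by rw [← heq]; linarith)
  rw [← heq] at hle
  simp only [smul_eq_mul, ← sub_eq_add_neg] at hlt
  rw [show 1 / 2 * (Q i + t) + 1 / 2 * (Q i - t) = Q i by ring] at hlt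
  linarith

theorem IsMaxOn.exists_forall_ne_eq
    (hmax : IsMaxOn (fun Q => ∑ m, w (Q m)) (stdSimplex ℝ ι) Q) (hQ : Q ∈ stdSimplex ℝ ι)
    {w' : ℝ → ℝ} {p₀ : ℝ} (hw0 : Tendsto (slope w 0) (𝓝[>] 0) atTop)
    (hw : ∀ p ∈ Ioo 0 1, HasDerivAt w (w' p) p)
    (hanti : StrictAntiOn w' (Ioo 0 1 ∩ Iic p₀)) (hmono : StrictMonoOn w' (Ioo 0 1 ∩ Ici p₀)) :
    ∃ i₀ b, b ≤ Q i₀ ∧ ∀ j ≠ i₀, Q j = b := by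
  by_cases hone : ∃ i, Q i = 1
  · obtain ⟨i, hi⟩ := hone
    refine ⟨i, 0, hi ▸ zero_le_one, fun j hj => ?_⟩
    have hrest := Finset.add_sum_erase Finset.univ Q (Finset.mem_univ i)
    rw [hQ.2, hi] at hrest
    exact (Finset.sum_eq_zero_iff_of_nonneg fun m _ => hQ.1 m).mp (by linarith) j
      (Finset.mem_erase.mpr ⟨hj, Finset.mem_univ j⟩)
  push Not at hone
  obtain ⟨i, hi⟩ : ∃ i, 0 < Q i := by
    by_contra! h
    linarith [Finset.sum_nonpos (s := Finset.univ) fun m _ => h m, hQ.2]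
  have hlt1 m : Q m < 1 := (mem_Icc_of_mem_stdSimplex hQ m).2.lt_of_ne (hone m)
  have hpos := hmax.pos_of_tendsto_slope hQ hw0 hi (hw _ ⟨hi, hlt1 i⟩).differentiableAt
  have hmem m : Q m ∈ Ioo 0 1 := ⟨hpos m, hlt1 m⟩
  have hfoc m n : w' (Q m) = w' (Q n) := by
    rcases eq_or_ne m n with rfl | hmn
    · rfl
    · exact hmax.eq_of_hasDerivAt hQ hmn (hpos m) (hpos n) (hw _ (hmem m)) (hw _ (hmem n))
  have hsplit {m n} (hmn : Q m < Q n) : Q m < p₀ ∧ p₀ < Q n :=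
    lt_and_lt_of_strictAntiOn_of_strictMonoOn hanti hmono (hmem m) (hmem n) hmn (hfoc m n)
  obtain ⟨imax, -, hle_max⟩ := Finset.exists_max_image Finset.univ Q ⟨i, Finset.mem_univ i⟩
  obtain ⟨imin, -, hmin_le⟩ := Finset.exists_min_image Finset.univ Q ⟨i, Finset.mem_univ i⟩
  refine ⟨imax, Q imin, hmin_le _ (Finset.mem_univ _), fun j hj => ?_⟩
  rcases (hmin_le imax (Finset.mem_univ _)).eq_or_lt with heq | hlt
  · exact le_antisymm (heq ▸ hle_max j (Finset.mem_univ j)) (hmin_le j (Finset.mem_univ j))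
  have hopen : IsOpen (Ioo 0 1 ∩ Ioi p₀) := isOpen_Ioo.inter isOpen_Ioi
  have hconvex : StrictConvexOn ℝ (Ioo 0 1 ∩ Ioi p₀) w :=
    strictConvexOn_of_hasDerivAt hopen ((convex_Ioo 0 1).inter (convex_Ioi p₀))
      (fun p hp => hw p hp.1) (hmono.mono fun p hp => ⟨hp.1, mem_Ici.mpr hp.2.le⟩)
  have hj_lt : Q j < Q imax := (hle_max j (Finset.mem_univ j)).lt_of_ne fun h =>
    hmax.ne_of_strictConvexOn hQ hconvex (Ne.symm hj) (hpos imax)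
      (hopen.mem_nhds ⟨hmem imax, (hsplit hlt).2⟩) h.symm
  refine le_antisymm (not_lt.mp fun hj_gt => ?_) (hmin_le j (Finset.mem_univ j))
  linarith [(hsplit hj_gt).2, (hsplit hj_lt).1]

end SeparableMaximum

open Matrix in
theorem ConvexOn.sum_comp_mulVec_le {ι : Type*} [Fintype ι] [DecidableEq ι] {f : ℝ → ℝ}
    (hf : ConvexOn ℝ (Ici 0) f) {M : Matrix ι ι ℝ} (hM : M ∈ doublyStochastic ℝ ι)
    {P : ι → ℝ} (hP : ∀ i, 0 ≤ P i) : ∑ i, f ((M *ᵥ P) i) ≤ ∑ i, f (P i) :=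
  calc ∑ i, f ((M *ᵥ P) i) ≤ ∑ i, ∑ j, M i j * f (P j) := Finset.sum_le_sum fun i _ => by
        simpa [mulVec, dotProduct] using hf.map_sum_le (t := Finset.univ)
          (fun j _ => nonneg_of_mem_doublyStochastic hM)
          (sum_row_of_mem_doublyStochastic hM i) fun j _ => hP j
    _ = ∑ j, f (P j) := by
        rw [Finset.sum_comm]
        simp [← Finset.sum_mul, sum_col_of_mem_doublyStochastic hM]

section KL

open InformationTheory

variable {k : ℕ}

noncomputable def klTerm (k : ℕ) (p : ℝ) : ℝ := p * log p + p * log k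

theorem continuous_klTerm : Continuous (klTerm k) :=
  continuous_mul_log.add (continuous_id.mul continuous_const)

theorem hasDerivAt_klTerm {p : ℝ} (hp : p ≠ 0) : HasDerivAt (klTerm k) (log p + 1 + log k) p :=
  (hasDerivAt_mul_log hp).add (by simpa using (hasDerivAt_id p).mul_const (log (k : ℝ)))

theorem convexOn_klTerm : ConvexOn ℝ (Ici 0) (klTerm k) := by
  have h : klTerm k = (fun p => p * log p) + fun p => log k • id p := by
    ext p
    simp [klTerm, mul_comm]
  rw [h]
  exact convexOn_mul_log.add ((convexOn_id (convex_Ici 0)).smul (log_natCast_nonneg k))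

theorem klUnif_eq_sum_klTerm (hk : 0 < k) (P : Fin k → ℝ) :
    klUnif k P = ∑ i, klTerm k (P i) := by
  refine Finset.sum_congr rfl fun i _ => ?_
  rcases eq_or_ne (P i) 0 with h | h
  · simp [h, klTerm]
  · rw [div_div_eq_mul_div, div_one, log_mul h (by positivity), klTerm]
    ring

theorem klUnif_eq_sum_klFun (hk : 0 < k) {P : Fin k → ℝ} (hP : ∑ i, P i = 1) :
    klUnif k P = (k : ℝ)⁻¹ * ∑ i, klFun (k * P i) := by
  have hk' : (k : ℝ) ≠ 0 := by positivity
  have hterm p : klTerm k p = (k : ℝ)⁻¹ * klFun (k * p) + (p - (k : ℝ)⁻¹) := by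
    rcases eq_or_ne p 0 with rfl | hp
    · simp [klTerm, klFun]
    · rw [klFun, klTerm, log_mul hk' hp]
      field_simp
      ring
  simp only [klUnif_eq_sum_klTerm hk, hterm, Finset.sum_add_distrib, Finset.mul_sum,
    Finset.sum_sub_distrib, hP, Finset.sum_const, Finset.card_univ, Fintype.card_fin, nsmul_eq_mul,
    mul_inv_cancel₀ hk', sub_self, add_zero]

theorem klUnif_nonneg (hk : 0 < k) {P : Fin k → ℝ} (hP : P ∈ stdSimplex ℝ (Fin k)) :
    0 ≤ klUnif k P := by
  rw [klUnif_eq_sum_klFun hk hP.2]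
  exact mul_nonneg (by positivity) (Finset.sum_nonneg fun i _ =>
    klFun_nonneg (mul_nonneg (Nat.cast_nonneg k) (hP.1 i)))

theorem klUnif_pos (hk : 0 < k) {P : Fin k → ℝ} (hP : P ∈ stdSimplex ℝ (Fin k))
    (hne : P ≠ fun _ => 1 / (k : ℝ)) : 0 < klUnif k P := by
  obtain ⟨i, hi⟩ := Function.ne_iff.mp hne
  have hk' : (k : ℝ) ≠ 0 := by positivity
  have hnonneg j : 0 ≤ (k : ℝ) * P j := mul_nonneg (Nat.cast_nonneg k) (hP.1 j)
  rw [klUnif_eq_sum_klFun hk hP.2]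
  refine mul_pos (by positivity)
    (Finset.sum_pos' (fun j _ => klFun_nonneg (hnonneg j)) ⟨i, Finset.mem_univ i, ?_⟩)
  refine (klFun_nonneg (hnonneg i)).lt_of_ne' fun h => hi ?_
  rw [klFun_eq_zero_iff (hnonneg i)] at h
  field_simp
  linarith

theorem sum_eq_add_mul_of_forall_ne_eq {Q : Fin k → ℝ} {i₀ : Fin k} {b : ℝ}
    (h : ∀ j ≠ i₀, Q j = b) (f : ℝ → ℝ) : ∑ j, f (Q j) = f (Q i₀) + (k - 1) * f b := by
  rw [← Finset.add_sum_erase _ _ (Finset.mem_univ i₀),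
    Finset.sum_congr rfl fun j hj => by rw [h j (Finset.ne_of_mem_erase hj)], Finset.sum_const,
    Finset.card_erase_of_mem (Finset.mem_univ i₀), Finset.card_univ, Fintype.card_fin,
    nsmul_eq_mul, Nat.cast_pred i₀.pos]

theorem klUnif_eq_psi (hk : 1 < k) {Q : Fin k → ℝ} (hQ : ∑ j, Q j = 1) {i₀ : Fin k} {b : ℝ}
    (h : ∀ j ≠ i₀, Q j = b) : klUnif k Q = psi k (Q i₀) := by
  have hk1 : (k : ℝ) - 1 ≠ 0 := sub_ne_zero.mpr (by exact_mod_cast hk.ne')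
  have hb : (k - 1) * b = 1 - Q i₀ := by
    have := sum_eq_add_mul_of_forall_ne_eq h id
    simp only [id, hQ] at this
    linarith
  rw [klUnif_eq_sum_klTerm (by omega), sum_eq_add_mul_of_forall_ne_eq h, psi, ← hb,
    mul_div_cancel_left₀ b hk1, klTerm, klTerm, mul_add, ← mul_assoc, ← mul_assoc, hb]
  ring

theorem psi_one_div (hk : 1 < k) : psi k (1 / k) = 0 := by
  have hk0 : (k : ℝ) ≠ 0 := by positivity
  have hk1 : (k : ℝ) - 1 ≠ 0 := sub_ne_zero.mpr (by exact_mod_cast hk.ne')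
  rw [psi, show (1 - 1 / (k : ℝ)) / (k - 1) = 1 / k by field_simp, one_div, log_inv]
  ring

/-- The paper's `Q_x`, with its heavy coordinate at `i₀`. -/
noncomputable def qDist (k : ℕ) (i₀ : Fin k) (x : ℝ) : Fin k → ℝ :=
  update (fun _ => (1 - x) / (k - 1)) i₀ x

theorem qDist_apply_of_ne {i₀ j : Fin k} (x : ℝ) (hj : j ≠ i₀) :
    qDist k i₀ x j = (1 - x) / (k - 1) :=
  update_of_ne hj _ _

theorem sum_qDist (hk : 1 < k) (i₀ : Fin k) (x : ℝ) : ∑ j, qDist k i₀ x j = 1 := by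
  have hk1 : (k : ℝ) - 1 ≠ 0 := sub_ne_zero.mpr (by exact_mod_cast hk.ne')
  have := sum_eq_add_mul_of_forall_ne_eq (fun j hj => qDist_apply_of_ne (i₀ := i₀) x hj) id
  simp only [id, qDist, update_self] at this ⊢
  rw [this]
  field_simp
  ring

theorem qDist_mem_stdSimplex (hk : 1 < k) (i₀ : Fin k) {x : ℝ} (hx : x ∈ Icc 0 1) :
    qDist k i₀ x ∈ stdSimplex ℝ (Fin k) := by
  have hk1 : (0 : ℝ) < k - 1 := sub_pos.mpr (by exact_mod_cast hk)
  refine ⟨fun j => ?_, sum_qDist hk i₀ x⟩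
  rcases eq_or_ne j i₀ with rfl | hj
  · simpa [qDist] using hx.1
  · rw [qDist_apply_of_ne x hj]
    exact div_nonneg (by linarith [hx.2]) hk1.le

theorem qDist_ne_uniform (i₀ : Fin k) {x : ℝ} (hx : x ≠ 1 / k) :
    qDist k i₀ x ≠ fun _ => 1 / (k : ℝ) :=
  fun h => hx (by simpa [qDist] using congrFun h i₀)

theorem klUnif_qDist (hk : 1 < k) (i₀ : Fin k) (x : ℝ) : klUnif k (qDist k i₀ x) = psi k x := by
  simpa [qDist] using klUnif_eq_psi hk (sum_qDist hk i₀ x) fun j hj => qDist_apply_of_ne x hj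

theorem psi_pos (hk : 1 < k) {x : ℝ} (hx : x ∈ Ioc (1 / (k : ℝ)) 1) : 0 < psi k x := by
  have i₀ : Fin k := ⟨0, by omega⟩
  rw [← klUnif_qDist hk i₀]
  exact klUnif_pos (by omega) (qDist_mem_stdSimplex hk i₀
    (Ioc_subset_Icc_self.trans (Icc_subset_Icc_left (by positivity)) hx))
    (qDist_ne_uniform i₀ hx.1.ne')

end KL

section Potts

open Matrix

variable {k : ℕ} {lam : ℝ}

theorem potts_weights_nonneg (hk : 1 < k) (hlam : lam ∈ Icc (-(1 / ((k : ℝ) - 1))) 1) :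
    0 ≤ (1 - lam) / k ∧ 0 ≤ (1 - lam) / k + lam := by
  have hk1 : (0 : ℝ) < k - 1 := sub_pos.mpr (by exact_mod_cast hk)
  have hlam' : -1 ≤ lam * (k - 1) := by
    have := hlam.1
    rw [neg_le, le_div_iff₀ hk1] at this
    linarith
  refine ⟨div_nonneg (by linarith [hlam.2]) (by linarith), ?_⟩
  rw [div_add' _ _ _ (by positivity)]
  exact div_nonneg (by linarith) (by linarith)

theorem sum_pottsChannel (hk : 0 < k) (lam : ℝ) {P : Fin k → ℝ} (hP : ∑ i, P i = 1) :
    ∑ i, pottsChannel k lam P i = 1 := by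
  have hk0 : (k : ℝ) ≠ 0 := by positivity
  simp only [pottsChannel, Finset.sum_add_distrib, ← Finset.mul_sum, hP, Finset.sum_const,
    Finset.card_univ, Fintype.card_fin, nsmul_eq_mul]
  field_simp
  ring

theorem pottsChannel_mem_stdSimplex (hk : 1 < k) (hlam : lam ∈ Icc (-(1 / ((k : ℝ) - 1))) 1)
    {P : Fin k → ℝ} (hP : P ∈ stdSimplex ℝ (Fin k)) :
    pottsChannel k lam P ∈ stdSimplex ℝ (Fin k) := by
  obtain ⟨hc, hcl⟩ := potts_weights_nonneg hk hlam
  refine ⟨fun y => ?_, sum_pottsChannel (by omega) lam hP.2⟩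
  obtain ⟨hy0, hy1⟩ := mem_Icc_of_mem_stdSimplex hP y
  rw [pottsChannel]
  nlinarith [mul_nonneg (sub_nonneg.mpr hy1) hc, mul_nonneg hy0 hcl]

theorem klUnif_pottsChannel_eq_psi (hk : 1 < k) (lam : ℝ) {Q : Fin k → ℝ} (hQ : ∑ j, Q j = 1)
    {i₀ : Fin k} {b : ℝ} (h : ∀ j ≠ i₀, Q j = b) :
    klUnif k (pottsChannel k lam Q) = psi k (lam * Q i₀ + (1 - lam) / k) :=
  klUnif_eq_psi hk (sum_pottsChannel (by omega) lam hQ) (b := lam * b + (1 - lam) / k)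
    fun j hj => by rw [pottsChannel, h j hj]

theorem klUnif_pottsChannel_qDist (hk : 1 < k) (lam : ℝ) (i₀ : Fin k) (x : ℝ) :
    klUnif k (pottsChannel k lam (qDist k i₀ x)) = psi k (lam * x + (1 - lam) / k) := by
  simpa [qDist] using
    klUnif_pottsChannel_eq_psi hk lam (sum_qDist hk i₀ x) fun j hj => qDist_apply_of_ne x hj

noncomputable def pottsMatrix (k : ℕ) (lam : ℝ) : Matrix (Fin k) (Fin k) ℝ :=
  of fun i j => (1 - lam) / k + if i = j then lam else 0

theorem pottsMatrix_mem_doublyStochastic (hk : 1 < k)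
    (hlam : lam ∈ Icc (-(1 / ((k : ℝ) - 1))) 1) :
    pottsMatrix k lam ∈ doublyStochastic ℝ (Fin k) := by
  obtain ⟨hc, hcl⟩ := potts_weights_nonneg hk hlam
  have hk0 : (k : ℝ) ≠ 0 := by positivity
  have hsum : (k : ℝ) * ((1 - lam) / k) + lam = 1 := by field_simp; ring
  refine mem_doublyStochastic_iff_sum.mpr ⟨fun i j => ?_, fun i => ?_, fun j => ?_⟩
  · simp only [pottsMatrix, of_apply]
    split_ifs
    exacts [hcl, by linarith]
  · simpa [pottsMatrix, Finset.sum_add_distrib] using hsum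
  · simpa [pottsMatrix, Finset.sum_add_distrib] using hsum

theorem pottsMatrix_mulVec {P : Fin k → ℝ} (hP : ∑ i, P i = 1) :
    pottsMatrix k lam *ᵥ P = pottsChannel k lam P := by
  ext i
  simp only [mulVec, dotProduct, pottsMatrix, of_apply, add_mul, ite_mul, zero_mul,
    Finset.sum_add_distrib, ← Finset.mul_sum, hP, mul_one, Finset.sum_ite_eq, Finset.mem_univ,
    ↓reduceIte, pottsChannel]
  ring

theorem klUnif_pottsChannel_le (hk : 1 < k) (hlam : lam ∈ Icc (-(1 / ((k : ℝ) - 1))) 1)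
    {P : Fin k → ℝ} (hP : P ∈ stdSimplex ℝ (Fin k)) :
    klUnif k (pottsChannel k lam P) ≤ klUnif k P := by
  rw [← pottsMatrix_mulVec hP.2, klUnif_eq_sum_klTerm (by omega), klUnif_eq_sum_klTerm (by omega)]
  exact convexOn_klTerm.sum_comp_mulVec_le (pottsMatrix_mem_doublyStochastic hk hlam) hP.1

end Potts

section Gap

variable {k : ℕ} {lam c r : ℝ}

/-- With `c = (1 - λ) / k`, summing over the coordinates of `Q` gives
`D(PC_λ ∘ Q‖π) - r D(Q‖π)`. -/
noncomputable def gapTerm (k : ℕ) (lam c r p : ℝ) : ℝ := klTerm k (lam * p + c) - r * klTerm k p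

noncomputable def gapTermDeriv (k : ℕ) (lam c r p : ℝ) : ℝ :=
  lam * (log (lam * p + c) + 1 + log k) - r * (log p + 1 + log k)

theorem mul_add_pos_of_mem_Ioo (hc : 0 < c) (hcl : 0 ≤ c + lam) {p : ℝ} (hp : p ∈ Ioo 0 1) :
    0 < lam * p + c := by
  nlinarith [mul_pos (sub_pos.mpr hp.2) hc, mul_nonneg hp.1.le hcl]

theorem hasDerivAt_gapTerm {p : ℝ} (hp : p ≠ 0) (hq : lam * p + c ≠ 0) :
    HasDerivAt (gapTerm k lam c r) (gapTermDeriv k lam c r p) p := by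
  have haff : HasDerivAt (fun p => lam * p + c) lam p := (hasDerivAt_const_mul lam).add_const c
  refine (((hasDerivAt_klTerm hq).comp p haff).sub
    ((hasDerivAt_klTerm hp).const_mul r)).congr_deriv ?_
  rw [gapTermDeriv]
  ring

theorem hasDerivAt_gapTermDeriv {p : ℝ} (hp : p ≠ 0) (hq : lam * p + c ≠ 0) :
    HasDerivAt (gapTermDeriv k lam c r)
      ((lam * (lam - r) * p - r * c) / (p * (lam * p + c))) p := by
  have haff : HasDerivAt (fun p => lam * p + c) lam p := (hasDerivAt_const_mul lam).add_const c
  have := (((((hasDerivAt_log hq).comp p haff).add_const 1).add_const (log k)).const_mul lam).sub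
    ((((hasDerivAt_log hp).add_const 1).add_const (log k)).const_mul r)
  refine this.congr_deriv ?_
  field_simp
  ring

theorem tendsto_slope_gapTerm (hc : 0 < c) (hr : 0 < r) :
    Tendsto (slope (gapTerm k lam c r) 0) (𝓝[>] 0) atTop := by
  have hc' : HasDerivAt (klTerm k) (log c + 1 + log k) (lam * 0 + c) := by
    rw [mul_zero, zero_add]
    exact hasDerivAt_klTerm hc.ne'
  have haff : HasDerivAt (fun p => lam * p + c) lam 0 := (hasDerivAt_const_mul lam).add_const c
  have hcomp := hc'.comp 0 haff
  have hout := (hasDerivAt_iff_tendsto_slope.mp hcomp).mono_left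
    (nhdsWithin_mono _ fun _ ht => ne_of_gt ht)
  have hin : Tendsto (fun t => -r * (log t + log k)) (𝓝[>] 0) atTop :=
    (tendsto_log_nhdsGT_zero.atBot_add tendsto_const_nhds).const_mul_atBot_of_neg
      (neg_neg_of_pos hr)
  refine (hout.add_atTop hin).congr' ?_
  filter_upwards [self_mem_nhdsWithin] with t (ht : 0 < t)
  have ht' : t ≠ 0 := ht.ne'
  simp only [slope_def_field, gapTerm, klTerm, comp_apply]
  field_simp
  ring

theorem exists_strictAntiOn_strictMonoOn_gapTermDeriv (hc : 0 < c) (hcl : 0 ≤ c + lam)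
    (hr : 0 < r) : ∃ p₀, StrictAntiOn (gapTermDeriv k lam c r) (Ioo 0 1 ∩ Iic p₀) ∧
      StrictMonoOn (gapTermDeriv k lam c r) (Ioo 0 1 ∩ Ici p₀) := by
  obtain ⟨p₀, hp₀⟩ := exists_sign_change_mul_sub (mul_pos hr hc) (lam * (lam - r))
  have hden {p} (hp : p ∈ Ioo (0 : ℝ) 1) : 0 < p * (lam * p + c) :=
    mul_pos hp.1 (mul_add_pos_of_mem_Ioo hc hcl hp)
  exact ⟨p₀, strictAntiOn_and_strictMonoOn_of_hasDerivAt isOpen_Ioo (convex_Ioo 0 1)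
    (fun p hp => hasDerivAt_gapTermDeriv hp.1.ne' (mul_add_pos_of_mem_Ioo hc hcl hp).ne')
    (fun p hp hlt => div_neg_of_neg_of_pos ((hp₀ p hp).1 hlt) (hden hp))
    (fun p hp hlt => div_pos ((hp₀ p hp).2 hlt) (hden hp))⟩

end Gap

section Contraction

variable {k : ℕ} {lam r : ℝ}

theorem klUnif_pottsChannel_le_mul (hk : 1 < k) (hlam : lam ∈ Ico (-(1 / ((k : ℝ) - 1))) 1)
    (hr : 0 < r) (hψ : ∀ x ∈ Ioc (1 / (k : ℝ)) 1, psi k (lam * x + (1 - lam) / k) ≤ r * psi k x)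
    {P : Fin k → ℝ} (hP : P ∈ stdSimplex ℝ (Fin k)) :
    klUnif k (pottsChannel k lam P) ≤ r * klUnif k P := by
  set c := (1 - lam) / (k : ℝ)
  have hc : 0 < c := div_pos (sub_pos.mpr hlam.2) (by positivity)
  have hcl : 0 ≤ c + lam := (potts_weights_nonneg hk (Ico_subset_Icc_self hlam)).2
  have hgap (Q : Fin k → ℝ) :
      ∑ m, gapTerm k lam c r (Q m) = klUnif k (pottsChannel k lam Q) - r * klUnif k Q := by
    simp only [klUnif_eq_sum_klTerm (by omega : 0 < k), gapTerm, pottsChannel, Finset.mul_sum,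
      Finset.sum_sub_distrib]
    rfl
  have hcont : Continuous (gapTerm k lam c r) :=
    (continuous_klTerm.comp (by fun_prop)).sub (continuous_const.mul continuous_klTerm)
  obtain ⟨Q, hQ, hmax⟩ := (isCompact_stdSimplex ℝ (Fin k)).exists_isMaxOn ⟨P, hP⟩
    (continuous_finsetSum _ fun m _ => hcont.comp (continuous_apply m)).continuousOn
  obtain ⟨p₀, hanti, hmono⟩ := exists_strictAntiOn_strictMonoOn_gapTermDeriv (k := k) hc hcl hr
  obtain ⟨i₀, b, hb, hQb⟩ := hmax.exists_forall_ne_eq hQ (tendsto_slope_gapTerm hc hr)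
    (fun p hp => hasDerivAt_gapTerm hp.1.ne' (mul_add_pos_of_mem_Ioo hc hcl hp).ne') hanti hmono
  have hx : 1 / (k : ℝ) ≤ Q i₀ := by
    have hsum := sum_eq_add_mul_of_forall_ne_eq hQb id
    simp only [id, hQ.2] at hsum
    have hk1 : (0 : ℝ) ≤ k - 1 := sub_nonneg.mpr (by exact_mod_cast hk.le)
    rw [div_le_iff₀ (by positivity)]
    nlinarith [mul_le_mul_of_nonneg_left hb hk1]
  have hQ_le : ∑ m, gapTerm k lam c r (Q m) ≤ 0 := by
    rw [hgap, klUnif_pottsChannel_eq_psi hk lam hQ.2 hQb, klUnif_eq_psi hk hQ.2 hQb]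
    rcases hx.eq_or_lt with hx | hx
    · have hk0 : (k : ℝ) ≠ 0 := by positivity
      rw [← hx, show lam * (1 / k) + (1 - lam) / k = 1 / (k : ℝ) by field_simp; ring,
        psi_one_div hk]
      simp
    · linarith [hψ _ ⟨hx, (mem_Icc_of_mem_stdSimplex hQ i₀).2⟩]
  have hPQ : ∑ m, gapTerm k lam c r (P m) ≤ ∑ m, gapTerm k lam c r (Q m) := hmax hP
  linarith [hgap P]

theorem klUnif_pottsChannel_div_le (hk : 1 < k) (hlam : lam ∈ Icc (-(1 / ((k : ℝ) - 1))) 1)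
    (hr : 0 ≤ r) (hψ : ∀ x ∈ Ioc (1 / (k : ℝ)) 1, psi k (lam * x + (1 - lam) / k) / psi k x ≤ r)
    {P : Fin k → ℝ} (hP : P ∈ stdSimplex ℝ (Fin k)) (hne : P ≠ fun _ => 1 / (k : ℝ)) :
    klUnif k (pottsChannel k lam P) / klUnif k P ≤ r := by
  have hD := klUnif_pos (by omega) hP hne
  rcases hlam.2.eq_or_lt with rfl | hlam1
  · have h1 : (1 : ℝ) ∈ Ioc (1 / (k : ℝ)) 1 :=
      ⟨(div_lt_one (by positivity)).mpr (by exact_mod_cast hk), le_rfl⟩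
    have hPC : pottsChannel k 1 P = P := by
      ext
      simp [pottsChannel]
    simpa [hPC, div_self hD.ne', div_self (psi_pos hk h1).ne'] using hψ 1 h1
  · refine le_of_forall_gt_imp_ge_of_dense fun r' hr' => ?_
    rw [div_le_iff₀ hD]
    refine klUnif_pottsChannel_le_mul hk ⟨hlam.1, hlam1⟩ (hr.trans_lt hr') (fun x hx => ?_) hP
    rw [← div_le_iff₀ (psi_pos hk hx)]
    exact (hψ x hx).trans hr'.le

end Contraction

/-- The input-restricted KL contraction coefficient of the Potts channel at the uniform input
equals `sup_{x∈(1/k,1]} ψ(λx + (1−λ)/k)/ψ(x)`. -/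
theorem potts_eta_KL_uniform (k : ℕ) (hk : 2 ≤ k)
    (lam : ℝ) (hlam : lam ∈ Set.Icc (-(1 / ((k : ℝ) - 1))) 1) :
    sSup {r : ℝ | ∃ P : Fin k → ℝ, (∀ i, 0 ≤ P i) ∧ (∑ i, P i = 1) ∧
        P ≠ (fun _ => 1 / (k : ℝ)) ∧
        r = klUnif k (pottsChannel k lam P) / klUnif k P}
      = sSup {r : ℝ | ∃ x ∈ Set.Ioc (1 / (k : ℝ)) 1,
          r = psi k (lam * x + (1 - lam) / (k : ℝ)) / psi k x} := by
  set A := {r : ℝ | ∃ P : Fin k → ℝ, (∀ i, 0 ≤ P i) ∧ (∑ i, P i = 1) ∧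
    P ≠ (fun _ => 1 / (k : ℝ)) ∧ r = klUnif k (pottsChannel k lam P) / klUnif k P}
  set B := {r : ℝ | ∃ x ∈ Set.Ioc (1 / (k : ℝ)) 1,
    r = psi k (lam * x + (1 - lam) / (k : ℝ)) / psi k x}
  have hBA : B ⊆ A := by
    rintro _ ⟨x, hx, rfl⟩
    have i₀ : Fin k := ⟨0, by omega⟩
    refine ⟨qDist k i₀ x, (qDist_mem_stdSimplex hk i₀ ?_).1, sum_qDist hk i₀ x,
      qDist_ne_uniform i₀ hx.1.ne', by rw [klUnif_pottsChannel_qDist hk, klUnif_qDist hk]⟩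
    exact Ioc_subset_Icc_self.trans (Icc_subset_Icc_left (by positivity)) hx
  have hA : ∀ a ∈ A, 0 ≤ a ∧ a ≤ 1 := by
    rintro _ ⟨P, hP₀, hP₁, -, rfl⟩
    have hD := klUnif_nonneg (by omega) ⟨hP₀, hP₁⟩
    exact ⟨div_nonneg (klUnif_nonneg (by omega) (pottsChannel_mem_stdSimplex hk hlam ⟨hP₀, hP₁⟩))
      hD, div_le_one_of_le₀ (klUnif_pottsChannel_le hk hlam ⟨hP₀, hP₁⟩) hD⟩
  have hBne : B.Nonempty :=
    ⟨_, 1, ⟨(div_lt_one (by positivity)).mpr (by exact_mod_cast hk), le_rfl⟩, rfl⟩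
  have hB_bdd : BddAbove B := ⟨1, fun b hb => (hA b (hBA hb)).2⟩
  have hA_le : ∀ a ∈ A, a ≤ sSup B := by
    rintro _ ⟨P, hP₀, hP₁, hne, rfl⟩
    exact klUnif_pottsChannel_div_le hk hlam (Real.sSup_nonneg fun b hb => (hA b (hBA hb)).1)
      (fun x hx => le_csSup hB_bdd ⟨x, hx, rfl⟩) ⟨hP₀, hP₁⟩ hne
  exact le_antisymm (csSup_le (hBne.mono hBA) hA_le)
    (csSup_le_csSup ⟨1, fun a ha => (hA a ha).2⟩ hBne hBA)
end

section
/- Let k ≥ 3 be an integer. For every x ∈ (1/k, 1), ξ_1(x) ≥ (k/(k−1))·(1 + 1/log k)·ψ(x), where ξ_1(x) = (1/(k−1))·(−log x − (k−1)·log((1−x)/(k−1)) + k·(x·log x + (1−x)·log((1−x)/(k−1)))). (Equivalently, the 1-log-Sobolev constant α_1 of the Potts semigroup on [k] satisfies α_1 ≥ (k/(k−1))·(1 + 1/log k).) -/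
/-- `ξ_1(x)`. -/
noncomputable def xi1 (k : ℕ) (x : ℝ) : ℝ :=
  (1 / ((k : ℝ) - 1)) *
    (-Real.log x - ((k : ℝ) - 1) * Real.log ((1 - x) / ((k : ℝ) - 1))
      + (k : ℝ) * (x * Real.log x + (1 - x) * Real.log ((1 - x) / ((k : ℝ) - 1))))

open Real Set

lemma le_of_hasDerivAt_nonneg {f f' : ℝ → ℝ} {a b : ℝ} (hab : a ≤ b)
    (hf : ∀ t ∈ Icc a b, HasDerivAt f (f' t) t) (hf' : ∀ t ∈ Ioo a b, 0 ≤ f' t) :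
    f a ≤ f b := by
  refine monotoneOn_of_hasDerivWithinAt_nonneg (f' := f') (convex_Icc a b)
    (fun t ht ↦ (hf t ht).continuousAt.continuousWithinAt) (fun t ht ↦ ?_) (fun t ht ↦ ?_)
    (left_mem_Icc.2 hab) (right_mem_Icc.2 hab) hab
  · rw [interior_Icc] at ht ⊢
    exact (hf t (Ioo_subset_Icc_self ht)).hasDerivWithinAt
  · exact hf' t (by rwa [interior_Icc] at ht)

lemma log_le_log_add_div_sub_one {a v : ℝ} (ha : 0 < a) (hv : 0 < v) :
    log v ≤ log a + v / a - 1 := by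
  have := log_le_sub_one_of_pos (div_pos hv ha)
  rw [log_div hv.ne' ha.ne'] at this
  linarith

lemma two_mul_log_le_mul_log_two_mul_log {K : ℝ} (hK : 3 ≤ K) :
    2 * log K ≤ K * log (2 * log K) := by
  have hL : log 3 ≤ log K := log_le_log (by norm_num) hK
  have hL3 := log_three_gt_d9
  have hLpos : 0 < log K := by linarith
  have he := exp_one_lt_d9
  have he' := exp_one_gt_d9
  have heL : exp 1 * log K ≤ K := by
    have := log_le_log_add_div_sub_one (exp_pos 1) (by linarith : 0 < K)
    rw [log_exp, add_sub_cancel_left, le_div_iff₀ (exp_pos 1)] at this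
    linarith
  have hlog2L : log 2 + (1 - (log K)⁻¹) ≤ log (2 * log K) := by
    rw [log_mul two_ne_zero hLpos.ne']
    linarith [one_sub_inv_le_log_of_pos hLpos]
  have h2L : 0 ≤ log (2 * log K) := log_nonneg (by linarith)
  have hM : log K * (log 2 + (1 - (log K)⁻¹)) = log K * (log 2 + 1) - 1 := by
    field_simp; ring
  have hM' : 1.6931471803 * log K ≤ log K * (log 2 + 1) := by
    nlinarith [log_two_gt_d9]
  calc 2 * log K ≤ exp 1 * (log K * (log 2 + (1 - (log K)⁻¹))) := by
        rw [hM]; nlinarith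
    _ ≤ exp 1 * log K * log (2 * log K) := by
        rw [mul_assoc]; gcongr
    _ ≤ K * log (2 * log K) := by gcongr

lemma mul_log_add_one_le {K v : ℝ} (hK : 3 ≤ K) (hv : 0 < v) :
    K * (log v + 1) ≤ log K * (2 * v + K - 2) := by
  have hKpos : 0 < K := by linarith
  have hLpos : 0 < log K := log_pos (by linarith)
  have htangent := log_le_log_add_div_sub_one (by positivity : 0 < K / (2 * log K)) hv
  rw [log_div hKpos.ne' (by positivity), div_div_eq_mul_div] at htangent
  have hscaled : K * (log v + 1) ≤ K * (log K - log (2 * log K)) + 2 * log K * v := by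
    have h := mul_le_mul_of_nonneg_left htangent hKpos.le
    have hcancel : K * (v * (2 * log K) / K) = 2 * log K * v := by field_simp
    linarith
  nlinarith [two_mul_log_le_mul_log_two_mul_log hK]

lemma mul_mul_log_le {K z : ℝ} (hK : 3 ≤ K) (hz : 1 ≤ z) :
    K * z * log z ≤ log K * (z - 1) * (z + K - 1) := by
  have hderiv : ∀ v ∈ Icc 1 z,
      HasDerivAt (fun w ↦ log K * ((w - 1) * (w + (K - 1))) - K * (w * log w))
        (log K * (2 * v + K - 2) - K * (log v + 1)) v := by
    intro v hv
    have hpoly := (((hasDerivAt_id' v).sub_const 1).mul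
      ((hasDerivAt_id' v).add_const (K - 1))).const_mul (log K)
    exact (hpoly.sub ((hasDerivAt_mul_log (by linarith [hv.1] : v ≠ 0)).const_mul K)).congr_deriv
      (by ring)
  have := le_of_hasDerivAt_nonneg hz hderiv
    fun v hv ↦ sub_nonneg.2 (mul_log_add_one_le hK (by linarith [hv.1]))
  simp only [sub_self, mul_zero, zero_mul, log_one] at this
  linarith

/-- `(K - 1)(ξ₁(x) - K/(K-1) · (1 + 1/log K) · ψ(x))`, with `K` real. -/
noncomputable def deficit (K x : ℝ) : ℝ :=
  -log x - (K - 1) * log ((1 - x) / (K - 1)) - K * log K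
    - K / log K * (log K + x * log x + (1 - x) * log ((1 - x) / (K - 1)))

lemma deficit_one_div {K : ℝ} (hK : 1 < K) : deficit K (1 / K) = 0 := by
  have hcomplement : (1 - 1 / K) / (K - 1) = 1 / K := by
    field_simp [(by linarith : K - 1 ≠ 0)]
  have hlog : log (1 / K) = -log K := by rw [one_div, log_inv]
  rw [deficit, hcomplement, hlog]
  field_simp
  ring

lemma hasDerivAt_deficit {K t : ℝ} (hK : 1 < K) (ht₀ : 0 < t) (ht₁ : t < 1) :
    HasDerivAt (deficit K)
      ((K * t - 1) / (t * (1 - t)) - K / log K * log (t * (K - 1) / (1 - t))) t := by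
  have hK₁ : K - 1 ≠ 0 := by linarith
  have h1t : 1 - t ≠ 0 := by linarith
  have hlogCompl : HasDerivAt (fun s ↦ log ((1 - s) / (K - 1))) (-1 / (1 - t)) t := by
    refine ((((hasDerivAt_id' t).const_sub 1).div_const (K - 1)).log
      (div_ne_zero h1t hK₁)).congr_deriv ?_
    field_simp
  have hentropy := ((hasDerivAt_mul_log ht₀.ne').const_add (log K)).add
    (((hasDerivAt_id' t).const_sub 1).mul hlogCompl)
  have hD := (((hasDerivAt_log ht₀.ne').neg.sub (hlogCompl.const_mul (K - 1))).sub_const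
    (K * log K)).sub (hentropy.const_mul (K / log K))
  refine hD.congr_deriv ?_
  rw [log_div (mul_ne_zero ht₀.ne' hK₁) h1t, log_mul ht₀.ne' hK₁, log_div h1t hK₁]
  field_simp
  ring

lemma deficit_deriv_nonneg {K t : ℝ} (hK : 3 ≤ K) (ht₀ : 1 / K < t) (ht₁ : t < 1) :
    0 ≤ (K * t - 1) / (t * (1 - t)) - K / log K * log (t * (K - 1) / (1 - t)) := by
  have hKpos : 0 < K := by linarith
  have hLpos : 0 < log K := log_pos (by linarith)
  have htpos : 0 < t := (by positivity : 0 < 1 / K).trans ht₀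
  have h1t : 0 < 1 - t := by linarith
  have hK₁ : K - 1 ≠ 0 := by linarith
  have hKt : 1 < K * t := by rwa [div_lt_iff₀ hKpos, mul_comm] at ht₀
  set z := t * (K - 1) / (1 - t) with hz
  have hz1 : 1 ≤ z := by rw [hz, le_div_iff₀ h1t]; linarith
  rw [sub_nonneg]
  calc K / log K * log z = K * z * log z / (log K * z) := by field_simp
    _ ≤ log K * (z - 1) * (z + K - 1) / (log K * z) :=
        (div_le_div_iff_of_pos_right (by positivity)).2 (mul_mul_log_le hK hz1)
    _ = (K * t - 1) / (t * (1 - t)) := by rw [hz]; field_simp; ring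

lemma deficit_nonneg {K x : ℝ} (hK : 3 ≤ K) (hx : x ∈ Ioo (1 / K) 1) : 0 ≤ deficit K x := by
  have hK₁ : 1 < K := by linarith
  rw [← deficit_one_div hK₁]
  refine le_of_hasDerivAt_nonneg hx.1.le (fun t ht ↦ hasDerivAt_deficit hK₁ ?_ ?_)
    fun t ht ↦ deficit_deriv_nonneg hK ht.1 (ht.2.trans hx.2)
  · exact (by positivity : 0 < 1 / K).trans_le ht.1
  · exact ht.2.trans_lt hx.2

/-- Lower bound on the 1-log-Sobolev constant of the Potts semigroup:
`ξ_1(x) ≥ (k/(k−1))·(1 + 1/log k)·ψ(x)` for all `x ∈ (1/k, 1)` and `k ≥ 3`. -/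
theorem xi1_ge (k : ℕ) (hk : 3 ≤ k) (x : ℝ) (hx : x ∈ Set.Ioo (1 / (k : ℝ)) 1) :
    xi1 k x ≥ (k : ℝ) / ((k : ℝ) - 1) * (1 + 1 / Real.log (k : ℝ)) * psi k x := by
  have hK : (3 : ℝ) ≤ k := by exact_mod_cast hk
  have hK₁ : (k : ℝ) - 1 ≠ 0 := by linarith
  have hL : log k ≠ 0 := (log_pos (by linarith)).ne'
  have hgap : xi1 k x - k / (k - 1) * (1 + 1 / log k) * psi k x = deficit k x / (k - 1) := by
    rw [xi1, psi, deficit]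
    field_simp
    ring
  rw [ge_iff_le, ← sub_nonneg, hgap]
  exact div_nonneg (deficit_nonneg hK hx) (by linarith)
end

section
/- For all real numbers r ∈ (0,1) and a > 0, one has (r−1)·(1−(a+1)^{−r})·log(a+1) − r·(a/(a+1))·(1−(a+1)^{1−r}) > 0. -/
/-!
With `x = a + 1 > 1` the expression is `F r x`, and `F r 1 = 0`. The derivative of `F r` is
`x ^ (-1 - r) * G r x`, where `G r 1 = 0` and `G r` has derivative
`r (1 - r) (1 - 1/x) (1 - x ^ (r - 1)) > 0` for `x > 1`. So `G r` increases from `0` on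
`(1, ∞)`, hence so does `F r`.
-/

open Real Set

lemma pos_of_hasDerivAt_pos_of_eq_zero {f f' : ℝ → ℝ} {a b : ℝ} (hfa : f a = 0)
    (hf : ∀ x, a ≤ x → HasDerivAt f (f' x) x) (hf' : ∀ x, a < x → 0 < f' x) (hab : a < b) :
    0 < f b := by
  have hmono : StrictMonoOn f (Ici a) :=
    strictMonoOn_of_deriv_pos (convex_Ici a)
      (fun x hx => (hf x hx).continuousAt.continuousWithinAt)
      (fun x hx => by
        rw [interior_Ici] at hx
        rw [(hf x hx.le).deriv]
        exact hf' x hx)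
  simpa [hfa] using hmono self_mem_Ici hab.le hab

namespace RpowLogIneq

noncomputable def F (r x : ℝ) : ℝ :=
  (r - 1) * (1 - x ^ (-r)) * log x - r * (1 - x⁻¹) * (1 - x ^ (1 - r))

noncomputable def G (r x : ℝ) : ℝ :=
  r * (r - 1) * log x + (r - 1) * (x ^ r - 1) + r * (1 - r) * x - r * x ^ (r - 1) + r ^ 2

lemma hasDerivAt_G (r : ℝ) {x : ℝ} (hx : 0 < x) :
    HasDerivAt (G r) (r * (1 - r) * (1 - x⁻¹) * (1 - x ^ (r - 1))) x := by
  have hlog := hasDerivAt_log hx.ne'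
  have hr := hasDerivAt_rpow_const (p := r) (Or.inl hx.ne')
  have hr1 := hasDerivAt_rpow_const (p := r - 1) (Or.inl hx.ne')
  refine (((((hlog.const_mul (r * (r - 1))).add ((hr.sub_const 1).const_mul (r - 1))).add
    ((hasDerivAt_id x).const_mul (r * (1 - r)))).sub (hr1.const_mul r)).add_const
      (r ^ 2)).congr_deriv ?_
  rw [rpow_sub_one hx.ne' (r - 1), rpow_sub_one hx.ne' r]
  field_simp
  ring

lemma G_pos {r x : ℝ} (hr : r ∈ Ioo (0 : ℝ) 1) (hx : 1 < x) : 0 < G r x := by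
  refine pos_of_hasDerivAt_pos_of_eq_zero (by simp [G]; ring)
    (fun y hy => hasDerivAt_G r (by linarith)) (fun y hy => ?_) hx
  have h1 : 0 < 1 - y⁻¹ := sub_pos.2 (inv_lt_one_of_one_lt₀ hy)
  have h2 : 0 < 1 - y ^ (r - 1) := sub_pos.2 (rpow_lt_one_of_one_lt_of_neg hy (by linarith [hr.2]))
  have h3 : 0 < r * (1 - r) := mul_pos hr.1 (by linarith [hr.2])
  positivity

lemma hasDerivAt_F (r : ℝ) {x : ℝ} (hx : 0 < x) :
    HasDerivAt (F r) (x ^ (-1 - r) * G r x) x := by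
  have hlog := hasDerivAt_log hx.ne'
  have hneg := hasDerivAt_rpow_const (p := -r) (Or.inl hx.ne')
  have hone := hasDerivAt_rpow_const (p := 1 - r) (Or.inl hx.ne')
  have hinv := hasDerivAt_inv hx.ne'
  refine ((((hneg.const_sub 1).const_mul (r - 1)).mul hlog).sub
    (((hinv.const_sub 1).const_mul r).mul (hone.const_sub 1))).congr_deriv ?_
  have hpq : x ^ (-r) * x ^ r = 1 := by rw [← rpow_add hx]; simp
  rw [G, show -1 - r = -r - 1 by ring, show 1 - r - 1 = -r by ring, rpow_sub_one hx.ne' r,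
    rpow_sub_one hx.ne', show 1 - r = -r + 1 by ring, rpow_add_one hx.ne']
  field_simp
  linear_combination (x - r * x + r) * hpq

lemma F_pos {r x : ℝ} (hr : r ∈ Ioo (0 : ℝ) 1) (hx : 1 < x) : 0 < F r x :=
  pos_of_hasDerivAt_pos_of_eq_zero (by simp [F]) (fun y hy => hasDerivAt_F r (by linarith))
    (fun y hy => mul_pos (rpow_pos_of_pos (by linarith) _) (G_pos hr hy)) hx

end RpowLogIneq

/-- For `r ∈ (0,1)` and `a > 0`:
`(r−1)(1−(a+1)^{−r})·log(a+1) − r·(a/(a+1))·(1−(a+1)^{1−r}) > 0`. -/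
theorem claim_elem (r a : ℝ) (hr : r ∈ Set.Ioo (0 : ℝ) 1) (ha : 0 < a) :
    0 < (r - 1) * (1 - (a + 1) ^ (-r)) * Real.log (a + 1)
      - r * (a / (a + 1)) * (1 - (a + 1) ^ (1 - r)) := by
  have hfrac : a / (a + 1) = 1 - (a + 1)⁻¹ := by field_simp; ring
  rw [hfrac]
  exact RpowLogIneq.F_pos hr (x := a + 1) (by linarith)
end

section
/- For every real number a > −1, one has a²/(1+a) ≥ (log(a+1))², with equality if and only if a = 0. -/
noncomputable def ff : ℝ → ℝ := fun x => x - x⁻¹ - 2 * Real.log x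

lemma hasDerivAt_ff (x : ℝ) (hx : 0 < x) :
    HasDerivAt ff ((1 - x⁻¹) ^ 2) x := by
  have h1 : HasDerivAt ff (1 - (-(x ^ 2)⁻¹) - 2 * x⁻¹) x := by
    exact ((hasDerivAt_id x).sub (hasDerivAt_inv hx.ne')).sub
      ((Real.hasDerivAt_log hx.ne').const_mul 2)
  convert h1 using 1
  field_simp
  ring

lemma ff_strict_Ici : StrictMonoOn ff (Set.Ici (1:ℝ)) := by
  apply strictMonoOn_of_deriv_pos (convex_Ici 1)
  · exact fun x hx => ((hasDerivAt_ff x (by linarith [hx.out])).continuousAt).continuousWithinAt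
  · intro x hx
    rw [interior_Ici] at hx
    have hx1 : (1:ℝ) < x := hx
    rw [(hasDerivAt_ff x (by linarith)).deriv]
    have : x⁻¹ < 1 := by
      rw [inv_lt_one_iff₀]; right; exact hx1
    nlinarith [sq_nonneg (1 - x⁻¹)]

lemma ff_strict_Ioc : StrictMonoOn ff (Set.Ioc (0:ℝ) 1) := by
  apply strictMonoOn_of_deriv_pos (convex_Ioc 0 1)
  · exact fun x hx => ((hasDerivAt_ff x hx.1).continuousAt).continuousWithinAt
  · intro x hx
    rw [interior_Ioc] at hx
    rw [(hasDerivAt_ff x hx.1).deriv]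
    have : (1:ℝ) < x⁻¹ := (one_lt_inv₀ hx.1).mpr hx.2
    nlinarith

lemma ff_one : ff 1 = 0 := by simp [ff]

lemma key (x : ℝ) (hx : 0 < x) (hne : x ≠ 1) :
    (2 * Real.log x) ^ 2 < (x - x⁻¹) ^ 2 := by
  rcases lt_or_gt_of_ne hne with h | h
  · -- x < 1 : ff x < 0, so x - x⁻¹ < 2 log x < 0 < x⁻¹ - x
    have hf : ff x < 0 := by
      have := ff_strict_Ioc ⟨hx, h.le⟩ ⟨zero_lt_one, le_refl 1⟩ h
      rwa [ff_one] at this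
    have hlog : Real.log x < 0 := Real.log_neg hx h
    have hx1 : (1:ℝ) < x⁻¹ := (one_lt_inv₀ hx).mpr h
    have h2 : x - x⁻¹ < 2 * Real.log x := by
      simp only [ff] at hf; linarith
    have h3 : 2 * Real.log x < -(x - x⁻¹) := by linarith
    nlinarith
  · have hf : 0 < ff x := by
      have := ff_strict_Ici (Set.self_mem_Ici) (le_of_lt h) h
      rwa [ff_one] at this
    have hlog : 0 < Real.log x := Real.log_pos h
    simp only [ff] at hf
    nlinarith

/-- For every `a > −1`: `a²/(1+a) ≥ (log(a+1))²`, with equality iff `a = 0`. -/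
theorem sq_div_ge_log_sq (a : ℝ) (ha : -1 < a) :
    a ^ 2 / (1 + a) ≥ Real.log (a + 1) ^ 2 ∧
    (a ^ 2 / (1 + a) = Real.log (a + 1) ^ 2 ↔ a = 0) := by
  have ht : (0:ℝ) < 1 + a := by linarith
  set x := Real.sqrt (1 + a) with hxdef
  have hx : 0 < x := Real.sqrt_pos.mpr ht
  have hx2 : x ^ 2 = 1 + a := Real.sq_sqrt ht.le
  have hlog : Real.log (a + 1) = 2 * Real.log x := by
    have : a + 1 = x ^ 2 := by linarith
    rw [this, Real.log_pow]; push_cast; ring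
  have hval : a ^ 2 / (1 + a) = (x - x⁻¹) ^ 2 := by
    have ha2 : a = x ^ 2 - 1 := by linarith
    rw [ha2]
    field_simp
    ring
  have main : a ≠ 0 → Real.log (a + 1) ^ 2 < a ^ 2 / (1 + a) := by
    intro hae
    have hxne : x ≠ 1 := by
      intro h; rw [h] at hx2; simp at hx2; exact hae (by linarith)
    rw [hval, hlog]
    exact key x hx hxne
  constructor
  · rcases eq_or_ne a 0 with rfl | h
    · simp
    · exact (main h).le
  · constructor
    · intro h
      by_contra hne
      exact absurd h (ne_of_gt (main hne))
    · rintro rfl; simp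
end

section
/- Let 𝒳 and 𝒴 be finite sets, W a Markov kernel from 𝒳 to 𝒴 (a row-stochastic matrix W(x,y) ≥ 0 with Σ_y W(x,y) = 1), and P_X a probability distribution on 𝒳 with full support such that P_Y := P_X W also has full support. Suppose ŝ : ℝ_{≥0} → ℝ_{≥0} is concave and non-decreasing and satisfies D(QW || P_Y) ≤ ŝ(D(Q || P_X)) for every probability distribution Q on 𝒳. Then for every n ≥ 1 and every probability distribution Q_{X^n} on 𝒳^n, D(Q_{X^n} W^{⊗n} || P_Y^{⊗n}) ≤ n·ŝ( (1/n)·D(Q_{X^n} || P_X^{⊗n}) ), where W^{⊗n} is the product channel (W^{⊗n})((x_1,…,x_n),(y_1,…,y_n)) = Π_i W(x_i,y_i) and P^{⊗n} denotes the n-fold product distribution. -/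
/-!
Induction on `n`, splitting `𝒳ⁿ⁺¹ = 𝒳ⁿ × 𝒳`. For a product channel `W₁ ⊗ W₂` and an input `Q`
on `𝒳₁ × 𝒳₂`, the chain rule splits `D(Q(W₁ ⊗ W₂) ‖ PY₁ ⊗ PY₂)` into the divergence of the first
output marginal `Q₁W₁`, at most `f(D(Q₁ ‖ P₁))` by the SDPI of `W₁`, and the conditional
divergence of `Y₂` given `Y₁`. Given `Y₁ = y₁`, the output `Y₂` is produced by `W₂` from the
conditional law of `X₂`, so the SDPI of `W₂` row by row and Jensen for the concave `s` bound the
second term by `s(D(Q_{X₂|Y₁} ‖ P₂ | Q_{Y₁}))`. Data processing through `W₁ ⊗ id` and monotonicity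
of `s` replace this by `s(D(Q_{X₂|X₁} ‖ P₂ | Q₁))`. The two input divergences add up to
`D(Q ‖ P₁ ⊗ P₂)`, and concavity merges `n s(a/n) + s(b)` into `(n+1) s((a+b)/(n+1))`.

The conditional divergence `D(Q_{2|1} ‖ P | Q₁)` is written `kl Q (prodDist (fstMarginal Q) P)`,
which never divides by the marginal.
-/

open Finset Matrix Real
open scoped Kronecker

namespace FiniteKL

variable {α β α' β' U : Type*}

/-- Since `log 0 = 0`, a term with `p a > 0 = q a` contributes `0` rather than `∞`: hence the
hypotheses `q a = 0 → p a = 0` below. -/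
noncomputable def kl [Fintype α] (p q : α → ℝ) : ℝ := ∑ a, p a * log (p a / q a)

def prodDist (p : α → ℝ) (q : β → ℝ) : α × β → ℝ := fun x => p x.1 * q x.2

def fstMarginal [Fintype β] (Q : α × β → ℝ) : α → ℝ := fun a => ∑ b, Q (a, b)

def piDist (P : α → ℝ) (n : ℕ) : (Fin n → α) → ℝ := fun xs => ∏ i, P (xs i)

def piKernel (W : Matrix α β ℝ) (n : ℕ) : Matrix (Fin n → α) (Fin n → β) ℝ :=
  fun xs ys => ∏ i, W (xs i) (ys i)

/-- Kernels are row-stochastic matrices, so `Q ᵥ* W` is the output distribution `QW`. -/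
def SatisfiesSDPI [Fintype α] [Fintype β] (W : Matrix α β ℝ) (P : α → ℝ) (PY : β → ℝ)
    (f : ℝ → ℝ) : Prop :=
  ∀ Q ∈ stdSimplex ℝ α, kl (Q ᵥ* W) PY ≤ f (kl Q P)

theorem sub_le_mul_log_div {p q : ℝ} (hp : 0 ≤ p) (hq : 0 ≤ q) (hpq : q = 0 → p = 0) :
    p - q ≤ p * log (p / q) := by
  rcases hp.eq_or_lt with rfl | hp
  · simpa using hq
  have hq : 0 < q := hq.lt_of_ne fun h => hp.ne' (hpq h.symm)
  have hlog := one_sub_inv_le_log_of_pos (div_pos hp hq)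
  rw [inv_div] at hlog
  calc p - q = p * (1 - q / p) := by field_simp
    _ ≤ p * log (p / q) := mul_le_mul_of_nonneg_left hlog hp.le

theorem eq_zero_of_prodDist_fstMarginal_eq_zero [Fintype β] {Q : α × β → ℝ} {P : β → ℝ}
    (hQ : ∀ x, 0 ≤ Q x) (hP : ∀ b, 0 < P b) {x : α × β}
    (hx : prodDist (fstMarginal Q) P x = 0) : Q x = 0 := by
  have hM : fstMarginal Q x.1 = 0 := (mul_eq_zero.1 hx).resolve_right (hP x.2).ne'
  exact congrFun ((Fintype.sum_eq_zero_iff_of_nonneg fun b => hQ (x.1, b)).1 hM) x.2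

theorem vecMul_one_kronecker_apply [Fintype α] [Fintype U] [DecidableEq U] (T : U × α → ℝ)
    (W : Matrix α β ℝ) (u : U) (y : β) :
    (T ᵥ* (1 ⊗ₖ W)) (u, y) = ((fun x => T (u, x)) ᵥ* W) y := by
  simp [vecMul, dotProduct, Fintype.sum_prod_type, one_apply, ite_mul]

section Fintype

variable [Fintype α] [Fintype β]

theorem kl_nonneg {p q : α → ℝ} (hp : ∀ a, 0 ≤ p a) (hq : ∀ a, 0 ≤ q a)
    (hpq : ∀ a, q a = 0 → p a = 0) (hsum : ∑ a, q a ≤ ∑ a, p a) : 0 ≤ kl p q := by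
  have h := sum_le_sum fun a (_ : a ∈ univ) => sub_le_mul_log_div (hp a) (hq a) (hpq a)
  rw [sum_sub_distrib] at h
  unfold kl
  linarith

theorem kl_nonneg_of_mem_stdSimplex {p q : α → ℝ} (hp : p ∈ stdSimplex ℝ α)
    (hq : q ∈ stdSimplex ℝ α) (hqpos : ∀ a, 0 < q a) : 0 ≤ kl p q :=
  kl_nonneg hp.1 hq.1 (fun a ha => absurd ha (hqpos a).ne') (hq.2.trans hp.2.symm).le

theorem kl_smul {c : ℝ} (hc : 0 ≤ c) (p q : α → ℝ) : kl (c • p) (c • q) = c * kl p q := by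
  rcases hc.eq_or_lt with rfl | hc
  · simp [kl]
  simp only [kl, mul_sum, Pi.smul_apply, smul_eq_mul, mul_div_mul_left _ _ hc.ne', mul_assoc]

theorem kl_smul_right {p q : α → ℝ} {c : ℝ} (hc : 0 < c) (hpq : ∀ a, q a = 0 → p a = 0) :
    kl p (c • q) = kl p q - (∑ a, p a) * log c := by
  rw [kl, kl, sum_mul, ← sum_sub_distrib]
  refine sum_congr rfl fun a _ => ?_
  by_cases hp : p a = 0
  · simp [hp]
  have hq : q a ≠ 0 := fun h => hp (hpq a h)
  rw [Pi.smul_apply, smul_eq_mul, mul_comm c, ← div_div, log_div (div_ne_zero hp hq) hc.ne',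
    mul_sub]

/-- The log-sum inequality: Gibbs' inequality against `b` rescaled to the mass of `a`. -/
theorem sum_mul_log_div_le_kl {a b : α → ℝ} (ha : ∀ i, 0 ≤ a i) (hb : ∀ i, 0 ≤ b i)
    (hab : ∀ i, b i = 0 → a i = 0) :
    (∑ i, a i) * log ((∑ i, a i) / ∑ i, b i) ≤ kl a b := by
  rcases (sum_nonneg fun i (_ : i ∈ univ) => ha i).eq_or_lt with hA | hA
  · simp [kl, (Fintype.sum_eq_zero_iff_of_nonneg ha).1 hA.symm]
  have hB : 0 < ∑ i, b i := by
    refine (sum_nonneg fun i _ => hb i).lt_of_ne fun hB => hA.ne ?_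
    have hb0 := (Fintype.sum_eq_zero_iff_of_nonneg hb).1 hB.symm
    exact (sum_eq_zero fun i _ => hab i (congrFun hb0 i)).symm
  have hc : 0 < (∑ i, a i) / ∑ i, b i := div_pos hA hB
  have hgibbs : 0 ≤ kl a (((∑ i, a i) / ∑ i, b i) • b) := by
    refine kl_nonneg ha (fun i => mul_nonneg hc.le (hb i)) (fun i h => hab i ?_) ?_
    · exact (mul_eq_zero.1 h).resolve_left hc.ne'
    · simp only [Pi.smul_apply, smul_eq_mul, ← mul_sum, div_mul_cancel₀ _ hB.ne', le_refl]
  rw [kl_smul_right hc hab] at hgibbs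
  linarith

theorem kl_comp_equiv [Fintype α'] (e : α' ≃ α) (p q : α → ℝ) : kl (p ∘ e) (q ∘ e) = kl p q :=
  e.sum_comp fun a => p a * log (p a / q a)

theorem kl_prod (p q : α × β → ℝ) :
    kl p q = ∑ a, kl (fun b => p (a, b)) (fun b => q (a, b)) :=
  Fintype.sum_prod_type _

theorem vecMul_mem_stdSimplex {Q : α → ℝ} {K : Matrix α β ℝ} (hQ : Q ∈ stdSimplex ℝ α)
    (hK : ∀ x, K x ∈ stdSimplex ℝ β) : Q ᵥ* K ∈ stdSimplex ℝ β := by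
  refine ⟨fun y => sum_nonneg fun x _ => mul_nonneg (hQ.1 x) ((hK x).1 y), ?_⟩
  simp only [vecMul, dotProduct]
  rw [sum_comm]
  simp only [← mul_sum, (hK _).2, mul_one, hQ.2]

theorem prodDist_mem_stdSimplex {p : α → ℝ} {q : β → ℝ} (hp : p ∈ stdSimplex ℝ α)
    (hq : q ∈ stdSimplex ℝ β) : prodDist p q ∈ stdSimplex ℝ (α × β) :=
  ⟨fun x => mul_nonneg (hp.1 x.1) (hq.1 x.2), by
    rw [Fintype.sum_prod_type]
    simp only [prodDist, ← mul_sum, hq.2, mul_one, hp.2]⟩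

theorem kronecker_mem_stdSimplex [Fintype α'] [Fintype β'] {A : Matrix α' α ℝ}
    {B : Matrix β' β ℝ} (hA : ∀ x, A x ∈ stdSimplex ℝ α) (hB : ∀ x, B x ∈ stdSimplex ℝ β)
    (x : α' × β') : (A ⊗ₖ B) x ∈ stdSimplex ℝ (α × β) :=
  prodDist_mem_stdSimplex (hA x.1) (hB x.2)

theorem one_mem_stdSimplex [DecidableEq α] (x : α) : (1 : Matrix α α ℝ) x ∈ stdSimplex ℝ α := by
  simpa only [← one_apply] using ite_eq_mem_stdSimplex ℝ x

theorem fstMarginal_mem_stdSimplex {Q : α × β → ℝ} (hQ : Q ∈ stdSimplex ℝ (α × β)) :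
    fstMarginal Q ∈ stdSimplex ℝ α :=
  ⟨fun a => sum_nonneg fun b _ => hQ.1 (a, b), by rw [← hQ.2, Fintype.sum_prod_type]; rfl⟩

theorem pi_prod_mem_stdSimplex {ι : Type*} [Fintype ι] [DecidableEq ι] {p : ι → β → ℝ}
    (hp : ∀ i, p i ∈ stdSimplex ℝ β) :
    (fun ys : ι → β => ∏ i, p i (ys i)) ∈ stdSimplex ℝ (ι → β) :=
  ⟨fun ys => prod_nonneg fun i _ => (hp i).1 (ys i), by
    rw [← Fintype.prod_sum]
    simp only [(hp _).2, prod_const_one]⟩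

theorem sum_smul_inv_sum_smul {t : α → ℝ} (ht : ∀ x, 0 ≤ t x) :
    (∑ x, t x) • (∑ x, t x)⁻¹ • t = t := by
  rcases (sum_nonneg fun x (_ : x ∈ univ) => ht x).eq_or_lt with hc | hc
  · rw [← hc, zero_smul]
    exact ((Fintype.sum_eq_zero_iff_of_nonneg ht).1 hc.symm).symm
  · exact smul_inv_smul₀ hc.ne' t

theorem inv_sum_smul_mem_stdSimplex {t : α → ℝ} (ht : ∀ x, 0 ≤ t x) (hc : ∑ x, t x ≠ 0) :
    (∑ x, t x)⁻¹ • t ∈ stdSimplex ℝ α :=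
  ⟨fun x => mul_nonneg (inv_nonneg.2 (sum_nonneg fun x _ => ht x)) (ht x), by
    simp only [Pi.smul_apply, smul_eq_mul, ← mul_sum, inv_mul_cancel₀ hc]⟩

theorem kl_vecMul_le {Q R : α → ℝ} {K : Matrix α β ℝ} (hK : ∀ x, K x ∈ stdSimplex ℝ β)
    (hQ : ∀ x, 0 ≤ Q x) (hR : ∀ x, 0 ≤ R x) (hQR : ∀ x, R x = 0 → Q x = 0) :
    kl (Q ᵥ* K) (R ᵥ* K) ≤ kl Q R := by
  have hterm : ∀ y, (Q ᵥ* K) y * log ((Q ᵥ* K) y / (R ᵥ* K) y) ≤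
      ∑ x, K x y * (Q x * log (Q x / R x)) := by
    intro y
    refine (sum_mul_log_div_le_kl (a := fun x => Q x * K x y) (b := fun x => R x * K x y)
      (fun x => mul_nonneg (hQ x) ((hK x).1 y)) (fun x => mul_nonneg (hR x) ((hK x).1 y))
      fun x h => ?_).trans_eq (sum_congr rfl fun x _ => ?_)
    · rcases mul_eq_zero.1 h with h | h <;> simp [h, hQR x]
    · rcases ((hK x).1 y).eq_or_lt with h | h
      · simp [← h]
      · simp only [mul_div_mul_right _ _ h.ne']
        ring
  calc kl (Q ᵥ* K) (R ᵥ* K) ≤ ∑ y, ∑ x, K x y * (Q x * log (Q x / R x)) :=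
        sum_le_sum fun y _ => hterm y
    _ = kl Q R := by simp only [kl, sum_comm (γ := β), ← sum_mul, (hK _).2, one_mul]

theorem fstMarginal_vecMul_kronecker [Fintype α'] [Fintype β'] {A : Matrix α α' ℝ}
    {B : Matrix β β' ℝ} (hB : ∀ x, ∑ y, B x y = 1) (Q : α × β → ℝ) :
    fstMarginal (Q ᵥ* (A ⊗ₖ B)) = fstMarginal Q ᵥ* A := by
  ext y
  simp only [fstMarginal, vecMul, dotProduct, kronecker_apply, Fintype.sum_prod_type]
  rw [sum_comm]
  refine sum_congr rfl fun a _ => ?_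
  rw [sum_comm, sum_mul]
  refine sum_congr rfl fun b _ => ?_
  simp only [← mul_sum, hB, mul_one]

theorem prodDist_vecMul_kronecker [Fintype α'] [Fintype β'] (p : α → ℝ) (q : β → ℝ)
    (A : Matrix α α' ℝ) (B : Matrix β β' ℝ) :
    prodDist p q ᵥ* (A ⊗ₖ B) = prodDist (p ᵥ* A) (q ᵥ* B) := by
  ext ⟨y, y'⟩
  simp only [prodDist, vecMul, dotProduct, kronecker_apply, Fintype.sum_prod_type, sum_mul_sum]
  refine sum_congr rfl fun a _ => sum_congr rfl fun b _ => ?_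
  ring

theorem kl_prodDist {Q : α × β → ℝ} {P₁ : α → ℝ} {P₂ : β → ℝ} (hQ : ∀ x, 0 ≤ Q x)
    (hP₁ : ∀ a, 0 < P₁ a) (hP₂ : ∀ b, 0 < P₂ b) :
    kl Q (prodDist P₁ P₂) = kl (fstMarginal Q) P₁ + kl Q (prodDist (fstMarginal Q) P₂) := by
  have hterm : ∀ x, Q x * log (Q x / (P₁ x.1 * P₂ x.2)) =
      Q x * log (fstMarginal Q x.1 / P₁ x.1) +
        Q x * log (Q x / (fstMarginal Q x.1 * P₂ x.2)) := by
    rintro ⟨a, b⟩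
    rcases (hQ (a, b)).eq_or_lt with h | h
    · simp [← h]
    have hM : 0 < fstMarginal Q a :=
      h.trans_le (single_le_sum (fun b _ => hQ (a, b)) (mem_univ b))
    have := hP₁ a
    have := hP₂ b
    rw [← mul_add, ← log_mul (by positivity) (by positivity)]
    congr 2
    field_simp
  simp only [kl, prodDist, hterm, sum_add_distrib]
  rw [Fintype.sum_prod_type]
  simp only [fstMarginal, sum_mul]

theorem kl_prodDist_fstMarginal_nonneg {Q : α × β → ℝ} {P : β → ℝ}
    (hQ : Q ∈ stdSimplex ℝ (α × β)) (hP : P ∈ stdSimplex ℝ β) (hPpos : ∀ b, 0 < P b) :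
    0 ≤ kl Q (prodDist (fstMarginal Q) P) :=
  have hQP := prodDist_mem_stdSimplex (fstMarginal_mem_stdSimplex hQ) hP
  kl_nonneg hQ.1 hQP.1 (fun _ => eq_zero_of_prodDist_fstMarginal_eq_zero hQ.1 hPpos)
    (hQP.2.trans hQ.2.symm).le

namespace SatisfiesSDPI

variable {W : Matrix α β ℝ} {P : α → ℝ} {PY : β → ℝ} {s : ℝ → ℝ}

theorem submatrix [Fintype α'] [Fintype β'] {f : ℝ → ℝ} (h : SatisfiesSDPI W P PY f)
    (e : α' ≃ α) (e' : β' ≃ β) : SatisfiesSDPI (W.submatrix e e') (P ∘ e) (PY ∘ e') f := by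
  intro Q hQ
  have hQe : Q ∘ e.symm ∈ stdSimplex ℝ α := ⟨fun a => hQ.1 _, (e.symm.sum_comp Q).trans hQ.2⟩
  have hkl : kl Q (P ∘ e) = kl (Q ∘ e.symm) P := by
    rw [← kl_comp_equiv e (Q ∘ e.symm)]
    simp [Function.comp_def]
  rw [submatrix_vecMul_equiv, kl_comp_equiv, hkl]
  exact h _ hQe

theorem kl_vecMul_smul_le (h : SatisfiesSDPI W P PY s) {t : α → ℝ} (ht : ∀ x, 0 ≤ t x) :
    kl (t ᵥ* W) ((∑ x, t x) • PY) ≤ (∑ x, t x) * s (kl ((∑ x, t x)⁻¹ • t) P) := by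
  rcases (sum_nonneg fun x (_ : x ∈ univ) => ht x).eq_or_lt with hc | hc
  · simp [kl, (Fintype.sum_eq_zero_iff_of_nonneg ht).1 hc.symm]
  have hq := inv_sum_smul_mem_stdSimplex ht hc.ne'
  set c := ∑ x, t x
  have htW : t ᵥ* W = c • (c⁻¹ • t) ᵥ* W := by rw [smul_vecMul, smul_inv_smul₀ hc.ne']
  rw [htW, kl_smul hc.le]
  exact mul_le_mul_of_nonneg_left (h _ hq) hc.le

theorem kl_vecMul_one_kronecker_le [Fintype U] [DecidableEq U] (h : SatisfiesSDPI W P PY s)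
    (hP : P ∈ stdSimplex ℝ α) (hPpos : ∀ x, 0 < P x) (hconc : ConcaveOn ℝ (Set.Ici 0) s)
    {T : U × α → ℝ} (hT : T ∈ stdSimplex ℝ (U × α)) :
    kl (T ᵥ* (1 ⊗ₖ W)) (prodDist (fstMarginal T) PY) ≤ s (kl T (prodDist (fstMarginal T) P)) := by
  set c := fstMarginal T
  set q : U → α → ℝ := fun u => (c u)⁻¹ • fun x => T (u, x)
  have hc : c ∈ stdSimplex ℝ U := fstMarginal_mem_stdSimplex hT
  have hrow : ∀ u, kl (fun y => (T ᵥ* (1 ⊗ₖ W)) (u, y)) (fun y => prodDist c PY (u, y)) ≤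
      c u * s (kl (q u) P) := by
    intro u
    simp only [vecMul_one_kronecker_apply]
    exact h.kl_vecMul_smul_le fun x => hT.1 (u, x)
  have hq : ∀ u, 0 ≤ kl (q u) P := by
    intro u
    rcases (hc.1 u).eq_or_lt with hcu | hcu
    · simp [q, ← hcu, kl]
    exact kl_nonneg_of_mem_stdSimplex
      (inv_sum_smul_mem_stdSimplex (fun x => hT.1 (u, x)) hcu.ne') hP hPpos
  calc kl (T ᵥ* (1 ⊗ₖ W)) (prodDist c PY) ≤ ∑ u, c u * s (kl (q u) P) :=
        (kl_prod _ _).trans_le (sum_le_sum fun u _ => hrow u)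
    _ ≤ s (∑ u, c u * kl (q u) P) := by
        simpa only [smul_eq_mul] using
          hconc.le_map_sum (t := univ) (fun u _ => hc.1 u) hc.2 fun u _ => hq u
    _ = s (kl T (prodDist c P)) := by
        rw [kl_prod]
        congr 1
        refine sum_congr rfl fun u _ => ?_
        rw [← kl_smul (hc.1 u)]
        exact congrArg₂ kl (sum_smul_inv_sum_smul fun x => hT.1 (u, x)) rfl

theorem kronecker [Fintype α'] [Fintype β'] {W₁ : Matrix α β ℝ} {W₂ : Matrix α' β' ℝ}
    {P₁ : α → ℝ} {P₂ : α' → ℝ} {PY₁ : β → ℝ} {PY₂ : β' → ℝ} {f g : ℝ → ℝ}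
    (h₁ : SatisfiesSDPI W₁ P₁ PY₁ f) (h₂ : SatisfiesSDPI W₂ P₂ PY₂ s)
    (hW₁ : ∀ x, W₁ x ∈ stdSimplex ℝ β) (hW₂ : ∀ x, W₂ x ∈ stdSimplex ℝ β')
    (hP₁ : P₁ ∈ stdSimplex ℝ α) (hP₁pos : ∀ x, 0 < P₁ x)
    (hP₂ : P₂ ∈ stdSimplex ℝ α') (hP₂pos : ∀ x, 0 < P₂ x)
    (hPY₁ : ∀ y, 0 < PY₁ y) (hPY₂ : ∀ y, 0 < PY₂ y)
    (hconc : ConcaveOn ℝ (Set.Ici 0) s) (hmono : MonotoneOn s (Set.Ici 0))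
    (hg : ∀ a b, 0 ≤ a → 0 ≤ b → f a + s b ≤ g (a + b)) :
    SatisfiesSDPI (W₁ ⊗ₖ W₂) (prodDist P₁ P₂) (prodDist PY₁ PY₂) g := by
  classical
  intro Q hQ
  have hK : ∀ x, (W₁ ⊗ₖ (1 : Matrix α' α' ℝ)) x ∈ stdSimplex ℝ (β × α') :=
    kronecker_mem_stdSimplex hW₁ one_mem_stdSimplex
  set T := Q ᵥ* (W₁ ⊗ₖ (1 : Matrix α' α' ℝ))
  have hT : T ∈ stdSimplex ℝ (β × α') := vecMul_mem_stdSimplex hQ hK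
  have hR : Q ᵥ* (W₁ ⊗ₖ W₂) = T ᵥ* (1 ⊗ₖ W₂) := by
    rw [vecMul_vecMul, ← mul_kronecker_mul, Matrix.mul_one, Matrix.one_mul]
  have hRfst : fstMarginal (Q ᵥ* (W₁ ⊗ₖ W₂)) = fstMarginal Q ᵥ* W₁ :=
    fstMarginal_vecMul_kronecker (fun x => (hW₂ x).2) Q
  have hTfst : fstMarginal T = fstMarginal Q ᵥ* W₁ :=
    fstMarginal_vecMul_kronecker (fun x => (one_mem_stdSimplex x).2) Q
  have hQ₁ := fstMarginal_mem_stdSimplex hQ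
  have hdpi : kl T (prodDist (fstMarginal T) P₂) ≤ kl Q (prodDist (fstMarginal Q) P₂) := by
    have hTP : prodDist (fstMarginal T) P₂ = prodDist (fstMarginal Q) P₂ ᵥ* (W₁ ⊗ₖ 1) := by
      rw [prodDist_vecMul_kronecker, vecMul_one, hTfst]
    rw [hTP]
    exact kl_vecMul_le hK hQ.1 (prodDist_mem_stdSimplex hQ₁ hP₂).1
      fun _ => eq_zero_of_prodDist_fstMarginal_eq_zero hQ.1 hP₂pos
  rw [kl_prodDist (vecMul_mem_stdSimplex hQ (kronecker_mem_stdSimplex hW₁ hW₂)).1 hPY₁ hPY₂,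
    kl_prodDist hQ.1 hP₁pos hP₂pos, hRfst]
  refine (add_le_add (h₁ _ hQ₁) ?_).trans (hg _ _ (kl_nonneg_of_mem_stdSimplex hQ₁ hP₁ hP₁pos)
    (kl_prodDist_fstMarginal_nonneg hQ hP₂ hP₂pos))
  rw [← hTfst, hR]
  exact (h₂.kl_vecMul_one_kronecker_le hP₂ hP₂pos hconc hT).trans
    (hmono (kl_prodDist_fstMarginal_nonneg hT hP₂ hP₂pos)
      (kl_prodDist_fstMarginal_nonneg hQ hP₂ hP₂pos) hdpi)

end SatisfiesSDPI

end Fintype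

def initLast (α : Type*) (n : ℕ) : (Fin (n + 1) → α) ≃ (Fin n → α) × α :=
  (Fin.snocEquiv fun _ => α).symm.trans (Equiv.prodComm _ _)

theorem piKernel_succ (W : Matrix α β ℝ) (n : ℕ) :
    piKernel W (n + 1) = (piKernel W n ⊗ₖ W).submatrix (initLast α n) (initLast β n) := by
  ext xs ys
  simp [piKernel, initLast, Fin.prod_univ_castSucc, Fin.init]

theorem piDist_succ (P : α → ℝ) (n : ℕ) :
    piDist P (n + 1) = prodDist (piDist P n) P ∘ initLast α n := by
  ext xs
  simp [piDist, prodDist, initLast, Fin.prod_univ_castSucc, Fin.init]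

theorem mul_apply_one_div_mul_add_le {s : ℝ → ℝ} (hconc : ConcaveOn ℝ (Set.Ici 0) s)
    (hmono : MonotoneOn s (Set.Ici 0)) {m a b : ℝ} (hm : 0 ≤ m) (ha : 0 ≤ a) (hb : 0 ≤ b) :
    m * s (1 / m * a) + s b ≤ (m + 1) * s (1 / (m + 1) * (a + b)) := by
  rcases hm.eq_or_lt with rfl | hm
  · simpa using hmono hb (add_nonneg ha hb) (le_add_of_nonneg_left ha)
  have hj := hconc.2 (Set.mem_Ici.2 (by positivity : 0 ≤ 1 / m * a)) (Set.mem_Ici.2 hb)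
    (by positivity : 0 ≤ m / (m + 1)) (by positivity : 0 ≤ 1 / (m + 1)) (by field_simp)
  have harg : m / (m + 1) * (1 / m * a) + 1 / (m + 1) * b = 1 / (m + 1) * (a + b) := by
    field_simp
  rw [smul_eq_mul, smul_eq_mul, smul_eq_mul, smul_eq_mul, harg] at hj
  calc m * s (1 / m * a) + s b
      = (m + 1) * (m / (m + 1) * s (1 / m * a) + 1 / (m + 1) * s b) := by field_simp
    _ ≤ (m + 1) * s (1 / (m + 1) * (a + b)) := mul_le_mul_of_nonneg_left hj (by positivity)

theorem satisfiesSDPI_piKernel [Fintype α] [Fintype β] {W : Matrix α β ℝ} {P : α → ℝ}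
    {PY : β → ℝ} {s : ℝ → ℝ} (h : SatisfiesSDPI W P PY s) (hW : ∀ x, W x ∈ stdSimplex ℝ β)
    (hP : P ∈ stdSimplex ℝ α) (hPpos : ∀ x, 0 < P x) (hPY : ∀ y, 0 < PY y)
    (hconc : ConcaveOn ℝ (Set.Ici 0) s) (hmono : MonotoneOn s (Set.Ici 0)) (n : ℕ) :
    SatisfiesSDPI (piKernel W n) (piDist P n) (piDist PY n) fun u => n * s (1 / n * u) := by
  induction n with
  | zero =>
    intro Q hQ
    have hQ1 : Q default = 1 := by simpa using hQ.2
    simp [kl, piKernel, piDist, vecMul, dotProduct, hQ1]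
  | succ n ih =>
    have hstep := ih.kronecker (g := fun u => (n + 1) * s (1 / (n + 1) * u)) h
      (fun xs => pi_prod_mem_stdSimplex fun i => hW (xs i)) hW
      (pi_prod_mem_stdSimplex fun _ => hP) (fun xs => prod_pos fun i _ => hPpos (xs i)) hP hPpos
      (fun ys => prod_pos fun i _ => hPY (ys i)) hPY hconc hmono
      fun a b ha hb => mul_apply_one_div_mul_add_le hconc hmono n.cast_nonneg ha hb
    have hsucc := hstep.submatrix (initLast α n) (initLast β n)
    rw [← piKernel_succ, ← piDist_succ, ← piDist_succ] at hsucc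
    simpa only [Nat.cast_succ] using hsucc

end FiniteKL

theorem nonlinear_sdpi_tensorization_general {X Y : Type*} [Fintype X] [Fintype Y]
    (W : X → Y → ℝ) (hW0 : ∀ x y, 0 ≤ W x y) (hW1 : ∀ x, ∑ y, W x y = 1)
    (PX : X → ℝ) (hPX0 : ∀ x, 0 < PX x) (hPX1 : ∑ x, PX x = 1)
    (hPY : ∀ y, 0 < ∑ x, PX x * W x y)
    (s : ℝ → ℝ) (hconc : ConcaveOn ℝ (Set.Ici 0) s) (hmono : MonotoneOn s (Set.Ici 0))
    (hsdpi : ∀ Q : X → ℝ, (∀ x, 0 ≤ Q x) → (∑ x, Q x = 1) →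
      (∑ y, (∑ x, Q x * W x y) * Real.log ((∑ x, Q x * W x y) / (∑ x, PX x * W x y)))
        ≤ s (∑ x, Q x * Real.log (Q x / PX x)))
    (n : ℕ)
    (Qn : (Fin n → X) → ℝ) (hQn0 : ∀ xs, 0 ≤ Qn xs) (hQn1 : ∑ xs, Qn xs = 1) :
    (∑ ys : Fin n → Y,
        (∑ xs : Fin n → X, Qn xs * ∏ i, W (xs i) (ys i)) *
          Real.log ((∑ xs : Fin n → X, Qn xs * ∏ i, W (xs i) (ys i))
            / (∏ i, ∑ x, PX x * W x (ys i))))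
      ≤ (n : ℝ) * s ((1 / (n : ℝ)) *
          ∑ xs : Fin n → X, Qn xs * Real.log (Qn xs / ∏ i, PX (xs i))) :=
  FiniteKL.satisfiesSDPI_piKernel (fun Q hQ => hsdpi Q hQ.1 hQ.2) (fun x => ⟨hW0 x, hW1 x⟩)
    ⟨fun x => (hPX0 x).le, hPX1⟩ hPX0 hPY hconc hmono n Qn ⟨hQn0, hQn1⟩

/-- Tensorization of a non-linear strong data processing inequality:
if `D(QW‖P_Y) ≤ ŝ(D(Q‖P_X))` for all distributions `Q` on `𝒳` (with `ŝ` concave,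
non-decreasing, non-negative on `ℝ_{≥0}`), then
`D(Q_{Xⁿ} W^{⊗n} ‖ P_Y^{⊗n}) ≤ n·ŝ((1/n)·D(Q_{Xⁿ} ‖ P_X^{⊗n}))`. -/
theorem nonlinear_sdpi_tensorization {X Y : Type*} [Fintype X] [Fintype Y]
    (W : X → Y → ℝ) (hW0 : ∀ x y, 0 ≤ W x y) (hW1 : ∀ x, ∑ y, W x y = 1)
    (PX : X → ℝ) (hPX0 : ∀ x, 0 < PX x) (hPX1 : ∑ x, PX x = 1)
    (hPY : ∀ y, 0 < ∑ x, PX x * W x y)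
    (s : ℝ → ℝ) (hconc : ConcaveOn ℝ (Set.Ici 0) s) (hmono : MonotoneOn s (Set.Ici 0))
    (hs0 : ∀ u : ℝ, 0 ≤ u → 0 ≤ s u)
    (hsdpi : ∀ Q : X → ℝ, (∀ x, 0 ≤ Q x) → (∑ x, Q x = 1) →
      (∑ y, (∑ x, Q x * W x y) * Real.log ((∑ x, Q x * W x y) / (∑ x, PX x * W x y)))
        ≤ s (∑ x, Q x * Real.log (Q x / PX x)))
    (n : ℕ) (hn : 1 ≤ n)
    (Qn : (Fin n → X) → ℝ) (hQn0 : ∀ xs, 0 ≤ Qn xs) (hQn1 : ∑ xs, Qn xs = 1) :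
    (∑ ys : Fin n → Y,
        (∑ xs : Fin n → X, Qn xs * ∏ i, W (xs i) (ys i)) *
          Real.log ((∑ xs : Fin n → X, Qn xs * ∏ i, W (xs i) (ys i))
            / (∏ i, ∑ x, PX x * W x (ys i))))
      ≤ (n : ℝ) * s ((1 / (n : ℝ)) *
          ∑ xs : Fin n → X, Qn xs * Real.log (Qn xs / ∏ i, PX (xs i))) :=
  nonlinear_sdpi_tensorization_general W hW0 hW1 PX hPX0 hPX1 hPY s hconc hmono hsdpi n Qn hQn0 hQn1
end

section
/- Let k ≥ 2 be an integer and λ ∈ [−1/(k−1), 1]. Then the (input-unrestricted) KL contraction coefficient of the Potts channel satisfies η_KL(PC_λ) := sup{ D(PC_λ∘P || PC_λ∘Q) / D(P||Q) : P, Q probability distributions on [k] with 0 < D(P||Q) < ∞ } = k·λ² / ((k−2)·λ + 2). -/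
open scoped BigOperators

/-- KL divergence between two distributions on `[k]` (finite, assuming absolute continuity). -/
noncomputable def klDiv' (k : ℕ) (P Q : Fin k → ℝ) : ℝ :=
  ∑ i, P i * Real.log (P i / Q i)

/-!
Upper bound: along `Q_t = Q + t (P - Q)` both `D(Q_t ‖ Q)` and `D(PC_λ Q_t ‖ PC_λ Q)`
vanish to first order at `t = 0`, and their second derivatives are `∑ Δ² / Q_t` and
`∑ λ² Δ² / (λ Q_t + c)` with `Δ = P - Q`, `c = (1 - λ) / k`. So it suffices to bound the
second sum by `η = λ² / (λ + 2c)` times the first, for every distribution `r` in place of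
`Q_t` and every `Δ` with `∑ Δ = 0`. Coordinatewise the slack is a positive multiple of
`Δ² / φ(r)`, `φ(r) = r (λ r + c) / (1 - 2r)`, which is nonnegative except at the (at most
one) coordinate where `r > 1/2`; that coordinate is absorbed by Cauchy–Schwarz and
superadditivity of `φ`.

Lower bound: for `P_t = (1/2 + t, 1/2 - t, 0, …)` and `Q = P_0` both divergences are quadratic
in `t` to leading order, with ratio tending to `η` as `t → 0`.
-/

open Real Filter Topology Set

namespace PottsEta

variable {k : ℕ}

lemma mul_log_div_self (x : ℝ) : x * log (x / x) = 0 := by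
  rcases eq_or_ne x 0 with rfl | hx <;> simp [*]

lemma mul_log_div_eq {q : ℝ} (hq : q ≠ 0) (x : ℝ) :
    x * log (x / q) = x * log x - x * log q := by
  rcases eq_or_ne x 0 with rfl | hx
  · simp
  · rw [log_div hx hq, mul_sub]

lemma klDiv'_self (q : Fin k → ℝ) : klDiv' k q q = 0 :=
  Finset.sum_eq_zero fun i _ => mul_log_div_self (q i)

section Segment

variable {q d : Fin k → ℝ}

lemma klDiv'_segment_eq (hq : ∀ i, d i ≠ 0 → q i ≠ 0) (t : ℝ) :
    klDiv' k (fun i => q i + t * d i) q =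
      ∑ i, ((q i + t * d i) * log (q i + t * d i) - (q i + t * d i) * log (q i)) := by
  refine Finset.sum_congr rfl fun i _ => ?_
  by_cases hqi : q i = 0
  · simp [hqi, not_imp_not.1 (hq i) hqi]
  · exact mul_log_div_eq hqi _

lemma continuous_klDiv'_segment (hq : ∀ i, d i ≠ 0 → q i ≠ 0) :
    Continuous fun t => klDiv' k (fun i => q i + t * d i) q := by
  simp only [klDiv'_segment_eq hq]
  refine continuous_finsetSum _ fun i _ => ?_
  have hline : Continuous fun t : ℝ => q i + t * d i := by fun_prop
  exact (continuous_mul_log.comp hline).sub (hline.mul continuous_const)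

lemma hasDerivAt_klDiv'_segment (hq : ∀ i, d i ≠ 0 → q i ≠ 0) {t : ℝ}
    (ht : ∀ i, d i ≠ 0 → q i + t * d i ≠ 0) :
    HasDerivAt (fun s => klDiv' k (fun i => q i + s * d i) q)
      (∑ i, d i * (log (q i + t * d i) - log (q i) + 1)) t := by
  simp only [klDiv'_segment_eq hq]
  refine HasDerivAt.fun_sum fun i _ => ?_
  by_cases hdi : d i = 0
  · simpa [hdi] using hasDerivAt_const t _
  have hline : HasDerivAt (fun s : ℝ => q i + s * d i) (d i) t := by
    simpa using ((hasDerivAt_id t).mul_const (d i)).const_add (q i)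
  refine (((hasDerivAt_mul_log (ht i hdi)).comp t hline).sub
    (hline.mul_const (log (q i)))).congr_deriv ?_
  ring

lemma hasDerivAt_sum_log_segment {t : ℝ} (ht : ∀ i, d i ≠ 0 → q i + t * d i ≠ 0) :
    HasDerivAt (fun s => ∑ i, d i * (log (q i + s * d i) - log (q i) + 1))
      (∑ i, d i ^ 2 / (q i + t * d i)) t := by
  refine HasDerivAt.fun_sum fun i _ => ?_
  by_cases hdi : d i = 0
  · simpa [hdi] using hasDerivAt_const t _
  have hline : HasDerivAt (fun s : ℝ => q i + s * d i) (d i) t := by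
    simpa using ((hasDerivAt_id t).mul_const (d i)).const_add (q i)
  refine ((((hasDerivAt_log (ht i hdi)).comp t hline).sub_const (log (q i))).add_const
    1).const_mul (d i) |>.congr_deriv ?_
  ring

lemma continuousOn_sum_log_segment {S : Set ℝ}
    (hS : ∀ t ∈ S, ∀ i, d i ≠ 0 → q i + t * d i ≠ 0) :
    ContinuousOn (fun t => ∑ i, d i * (log (q i + t * d i) - log (q i) + 1)) S := by
  refine continuousOn_finsetSum _ fun i _ => ?_
  by_cases hdi : d i = 0
  · simpa [hdi] using continuousOn_const
  exact continuousOn_const.mul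
    (((ContinuousOn.log (by fun_prop) fun t ht => hS t ht i hdi).sub continuousOn_const).add
      continuousOn_const)

end Segment

theorem nonneg_of_deriv_deriv_nonneg {A A' A'' : ℝ → ℝ} (hA : ContinuousOn A (Icc 0 1))
    (hA' : ContinuousOn A' (Ico 0 1)) (hdA : ∀ t ∈ Ioo (0 : ℝ) 1, HasDerivAt A (A' t) t)
    (hdA' : ∀ t ∈ Ioo (0 : ℝ) 1, HasDerivAt A' (A'' t) t) (hA0 : A 0 = 0) (hA'0 : A' 0 = 0)
    (hA'' : ∀ t ∈ Ioo (0 : ℝ) 1, 0 ≤ A'' t) : 0 ≤ A 1 := by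
  have hmono' : MonotoneOn A' (Ico 0 1) :=
    monotoneOn_of_hasDerivWithinAt_nonneg (convex_Ico 0 1) hA'
      (fun t ht => (hdA' t (by simpa using ht)).hasDerivWithinAt)
      (fun t ht => hA'' t (by simpa using ht))
  have hmono : MonotoneOn A (Icc 0 1) :=
    monotoneOn_of_hasDerivWithinAt_nonneg (convex_Icc 0 1) hA
      (fun t ht => (hdA t (by simpa using ht)).hasDerivWithinAt)
      (fun t ht => by
        rw [interior_Icc] at ht
        simpa [hA'0] using hmono' (left_mem_Ico.2 one_pos) (Ioo_subset_Ico_self ht) ht.1.le)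
  simpa [hA0] using hmono (left_mem_Icc.2 zero_le_one) (right_mem_Icc.2 zero_le_one) zero_le_one

section Comparison

variable {p q : Fin k → ℝ}

lemma segment_pos (hq : ∀ i, p i ≠ q i → 0 < q i) (hp : ∀ i, 0 ≤ p i) {i : Fin k}
    (hi : p i ≠ q i) {t : ℝ} (ht0 : 0 ≤ t) (ht1 : t < 1) : 0 < q i + t * (p i - q i) := by
  have := hq i hi
  nlinarith [mul_nonneg ht0 (hp i)]

theorem klDiv'_le_of_chiSq_le {p' q' : Fin k → ℝ} {η : ℝ}
    (hq : ∀ i, p i ≠ q i → 0 < q i) (hp : ∀ i, 0 ≤ p i) (hsum : ∑ i, p i = ∑ i, q i)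
    (hq' : ∀ i, p' i ≠ q' i → 0 < q' i) (hp' : ∀ i, 0 ≤ p' i)
    (hsum' : ∑ i, p' i = ∑ i, q' i)
    (hchi : ∀ t ∈ Ioo (0 : ℝ) 1, ∑ i, (p' i - q' i) ^ 2 / (q' i + t * (p' i - q' i)) ≤
      η * ∑ i, (p i - q i) ^ 2 / (q i + t * (p i - q i))) :
    klDiv' k p' q' ≤ η * klDiv' k p q := by
  have hqd : ∀ i, p i - q i ≠ 0 → q i ≠ 0 := fun i h => (hq i (sub_ne_zero.1 h)).ne'
  have hqd' : ∀ i, p' i - q' i ≠ 0 → q' i ≠ 0 := fun i h => (hq' i (sub_ne_zero.1 h)).ne'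
  have hpos : ∀ t ∈ Ico (0 : ℝ) 1, ∀ i, p i - q i ≠ 0 → q i + t * (p i - q i) ≠ 0 :=
    fun t ht i h => (segment_pos hq hp (sub_ne_zero.1 h) ht.1 ht.2).ne'
  have hpos' :
      ∀ t ∈ Ico (0 : ℝ) 1, ∀ i, p' i - q' i ≠ 0 → q' i + t * (p' i - q' i) ≠ 0 :=
    fun t ht i h => (segment_pos hq' hp' (sub_ne_zero.1 h) ht.1 ht.2).ne'
  have key := nonneg_of_deriv_deriv_nonneg
    (A := fun t => η * klDiv' k (fun i => q i + t * (p i - q i)) q -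
      klDiv' k (fun i => q' i + t * (p' i - q' i)) q')
    (A' := fun t => η * ∑ i, (p i - q i) * (log (q i + t * (p i - q i)) - log (q i) + 1) -
      ∑ i, (p' i - q' i) * (log (q' i + t * (p' i - q' i)) - log (q' i) + 1))
    (((continuous_const.mul (continuous_klDiv'_segment hqd)).sub
      (continuous_klDiv'_segment hqd')).continuousOn)
    ((continuousOn_const.mul (continuousOn_sum_log_segment hpos)).sub
      (continuousOn_sum_log_segment hpos'))
    (fun t ht => ((hasDerivAt_klDiv'_segment hqd (hpos t (Ioo_subset_Ico_self ht))).const_mul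
      η).sub (hasDerivAt_klDiv'_segment hqd' (hpos' t (Ioo_subset_Ico_self ht))))
    (fun t ht => ((hasDerivAt_sum_log_segment (hpos t (Ioo_subset_Ico_self ht))).const_mul
      η).sub (hasDerivAt_sum_log_segment (hpos' t (Ioo_subset_Ico_self ht))))
    (by simp [klDiv'_self]) (by simp [Finset.sum_sub_distrib, hsum, hsum'])
    (fun t ht => sub_nonneg.2 (hchi t ht))
  simpa using key

theorem klDiv'_nonneg (hq : ∀ i, p i ≠ q i → 0 < q i) (hp : ∀ i, 0 ≤ p i)
    (hsum : ∑ i, p i = ∑ i, q i) : 0 ≤ klDiv' k p q := by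
  -- compare with the degenerate pair `p' = q' = p`, whose divergence is `0`
  have h := klDiv'_le_of_chiSq_le (η := 1) hq hp hsum (fun i h => absurd rfl h) hp rfl
    fun t ht => by
      simp only [sub_self, ne_eq, OfNat.ofNat_ne_zero, not_false_eq_true, zero_pow, zero_div,
        Finset.sum_const_zero, one_mul]
      refine Finset.sum_nonneg fun i _ => ?_
      rcases eq_or_ne (p i) (q i) with h | h
      · simp [h]
      · exact div_nonneg (sq_nonneg _) (segment_pos hq hp h ht.1.le ht.2).le
  simpa [klDiv'_self] using h

end Comparison

section ChiSquare

variable {lam c : ℝ}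

lemma mul_add_pos_of_lt_one (hc : 0 < c) (ha : 0 ≤ lam + c) {r : ℝ} (hr0 : 0 ≤ r)
    (hr1 : r < 1) : 0 < lam * r + c := by
  have : lam * r + c = (1 - r) * c + r * (lam + c) := by ring
  rw [this]
  exact add_pos_of_pos_of_nonneg (mul_pos (sub_pos.2 hr1) hc) (mul_nonneg hr0 ha)

lemma mul_add_nonneg_of_le_one (hc : 0 ≤ c) (ha : 0 ≤ lam + c) {r : ℝ} (hr0 : 0 ≤ r)
    (hr1 : r ≤ 1) : 0 ≤ lam * r + c := by
  have : lam * r + c = (1 - r) * c + r * (lam + c) := by ring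
  rw [this]
  exact add_nonneg (mul_nonneg (sub_nonneg.2 hr1) hc) (mul_nonneg hr0 ha)

noncomputable def phi (lam c r : ℝ) : ℝ := r * (lam * r + c) / (1 - 2 * r)

lemma eta_div_sub_div_eq (hτ : lam + 2 * c ≠ 0) {r : ℝ} (hr : r ≠ 0)
    (hu : lam * r + c ≠ 0) :
    lam ^ 2 / (lam + 2 * c) / r - lam ^ 2 / (lam * r + c) =
      lam ^ 2 * c / (lam + 2 * c) / phi lam c r := by
  rw [phi, div_div_eq_mul_div]
  field_simp
  ring

lemma phi_nonneg (hc : 0 ≤ c) (ha : 0 ≤ lam + c) {z : ℝ} (hz0 : 0 ≤ z) (hz : 2 * z < 1) :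
    0 ≤ phi lam c z :=
  div_nonneg (mul_nonneg hz0 (mul_add_nonneg_of_le_one hc ha hz0 (by linarith))) (by linarith)

lemma phi_pos (hc : 0 < c) (ha : 0 ≤ lam + c) {z : ℝ} (hz0 : 0 < z) (hz : 2 * z < 1) :
    0 < phi lam c z :=
  div_pos (mul_pos hz0 (mul_add_pos_of_lt_one hc ha hz0.le (by linarith))) (by linarith)

lemma phi_add_phi_one_sub {r : ℝ} (hr : 2 * r ≠ 1) :
    phi lam c r + phi lam c (1 - r) = -(lam + c) := by
  have h1 : 1 - 2 * r ≠ 0 := fun h => hr (by linarith)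
  rw [phi, phi, show 1 - 2 * (1 - r) = -(1 - 2 * r) by ring, div_neg, ← sub_eq_add_neg,
    div_sub_div_same, div_eq_iff h1]
  ring

lemma phi_le_mul_phi (hτ : 0 ≤ lam + 2 * c) {α z : ℝ} (hα0 : 0 ≤ α) (hα1 : α ≤ 1)
    (hz0 : 0 ≤ z) (hz : 2 * z < 1) : phi lam c (α * z) ≤ α * phi lam c z := by
  have hd1 : 0 < 1 - 2 * (α * z) := by nlinarith
  have hd2 : 0 < 1 - 2 * z := by linarith
  rw [phi, phi, mul_div_assoc', div_le_div_iff₀ hd1 hd2]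
  nlinarith [mul_nonneg (mul_nonneg (mul_nonneg hα0 hz0) (sub_nonneg.2 hα1)) hτ,
    mul_nonneg hα0 hz0, mul_nonneg (mul_nonneg hα0 hz0) hz0]

lemma phi_add_le (hτ : 0 ≤ lam + 2 * c) {x y : ℝ} (hx : 0 ≤ x) (hy : 0 ≤ y)
    (hxy : 2 * (x + y) < 1) : phi lam c x + phi lam c y ≤ phi lam c (x + y) := by
  rcases (add_nonneg hx hy).eq_or_lt with h | hpos
  · obtain ⟨rfl, rfl⟩ : x = 0 ∧ y = 0 := ⟨by linarith, by linarith⟩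
    simp [phi]
  have hx' := phi_le_mul_phi hτ (div_nonneg hx hpos.le)
    ((div_le_one hpos).2 (by linarith)) hpos.le hxy
  have hy' := phi_le_mul_phi hτ (div_nonneg hy hpos.le)
    ((div_le_one hpos).2 (by linarith)) hpos.le hxy
  rw [div_mul_cancel₀ _ hpos.ne'] at hx' hy'
  have : x / (x + y) * phi lam c (x + y) + y / (x + y) * phi lam c (x + y) =
      phi lam c (x + y) := by
    field_simp
  linarith

lemma sum_phi_le {ι : Type*} (hτ : 0 ≤ lam + 2 * c) (s : Finset ι) {f : ι → ℝ}
    (hf : ∀ i ∈ s, 0 ≤ f i) (hs : 2 * ∑ i ∈ s, f i < 1) :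
    ∑ i ∈ s, phi lam c (f i) ≤ phi lam c (∑ i ∈ s, f i) := by
  induction s using Finset.cons_induction with
  | empty => simp [phi]
  | cons a s ha ih =>
    rw [Finset.sum_cons] at hs ⊢
    rw [Finset.sum_cons]
    have hfs : ∀ i ∈ s, 0 ≤ f i := fun i hi => hf i (Finset.mem_cons_of_mem hi)
    have hsum := Finset.sum_nonneg hfs
    have hfa := hf a (Finset.mem_cons_self a s)
    linarith [ih hfs (by linarith), phi_add_le hτ hfa hsum hs]

end ChiSquare

section ChiSquareContraction

variable {ι : Type*} [Fintype ι] {lam c : ℝ} {r Δ : ι → ℝ}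

lemma lt_one_of_ne_zero_of_sum_eq_zero (hr0 : ∀ y, 0 ≤ r y) (hr1 : ∑ y, r y = 1)
    (hΔ : ∑ y, Δ y = 0) (hsupp : ∀ y, Δ y ≠ 0 → r y ≠ 0) {y : ι} (hy : Δ y ≠ 0) :
    r y < 1 := by
  classical
  by_contra! h
  have hrest : ∑ z ∈ Finset.univ.erase y, r z = 0 := by
    have := Finset.add_sum_erase Finset.univ r (Finset.mem_univ y)
    linarith [Finset.sum_nonneg fun z (_ : z ∈ Finset.univ.erase y) => hr0 z]
  have hzero : ∀ z ∈ Finset.univ.erase y, Δ z = 0 := fun z hz =>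
    not_imp_not.1 (hsupp z) ((Finset.sum_eq_zero_iff_of_nonneg fun z _ => hr0 z).1 hrest z hz)
  rw [← Finset.add_sum_erase _ _ (Finset.mem_univ y), Finset.sum_eq_zero hzero, add_zero] at hΔ
  exact hy hΔ

/-- Only at a coordinate `y₀` with `r y₀ > 1 / 2` (there is at most one) can `phi` be negative.
By Cauchy–Schwarz the other coordinates contribute at least `Δ y₀ ^ 2 / ∑ phi (r y)`, and
superadditivity of `phi` with `phi r + phi (1 - r) = -(lam + c)` gives
`∑ phi (r y) ≤ -phi (r y₀)`. -/
theorem sum_sq_div_phi_nonneg (hc : 0 < c) (ha : 0 ≤ lam + c) (hr0 : ∀ y, 0 ≤ r y)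
    (hr1 : ∑ y, r y = 1) (hΔ : ∑ y, Δ y = 0) (hsupp : ∀ y, Δ y ≠ 0 → 0 < r y) :
    0 ≤ ∑ y, Δ y ^ 2 / phi lam c (r y) := by
  classical
  by_cases hsmall : ∀ y, 2 * r y ≤ 1
  · refine Finset.sum_nonneg fun y _ => ?_
    rcases (hsmall y).lt_or_eq with h | h
    · exact div_nonneg (sq_nonneg _) (phi_nonneg hc.le ha (hr0 y) h)
    · simp [phi, h]
  push Not at hsmall
  obtain ⟨y₀, hr₀⟩ := hsmall
  set s := Finset.univ.erase y₀
  have hrs : ∑ y ∈ s, r y = 1 - r y₀ := by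
    rw [← hr1, ← Finset.add_sum_erase _ _ (Finset.mem_univ y₀)]; ring
  have hΔs : ∑ y ∈ s, Δ y = -Δ y₀ := by
    rw [eq_neg_iff_add_eq_zero, add_comm, Finset.add_sum_erase _ _ (Finset.mem_univ y₀), hΔ]
  have hr₀1 : r y₀ ≤ 1 :=
    hr1 ▸ Finset.single_le_sum (fun y _ => hr0 y) (Finset.mem_univ y₀)
  have hsmall_s : ∀ y ∈ s, 2 * r y < 1 := fun y hy => by
    linarith [Finset.single_le_sum (fun y _ => hr0 y) hy]
  have hφs : ∀ y ∈ s, 0 ≤ phi lam c (r y) := fun y hy =>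
    phi_nonneg hc.le ha (hr0 y) (hsmall_s y hy)
  have hτ : 0 ≤ lam + 2 * c := by linarith
  have hφ₀ : ∑ y ∈ s, phi lam c (r y) ≤ -phi lam c (r y₀) := by
    have := phi_add_phi_one_sub (lam := lam) (c := c) (r := r y₀) (by linarith)
    calc ∑ y ∈ s, phi lam c (r y) ≤ phi lam c (∑ y ∈ s, r y) :=
          sum_phi_le hτ s (fun y _ => hr0 y) (by linarith)
      _ = phi lam c (1 - r y₀) := by rw [hrs]
      _ ≤ -phi lam c (r y₀) := by linarith
  set X := ∑ y ∈ s, Δ y ^ 2 / phi lam c (r y)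
  have hX : 0 ≤ X := Finset.sum_nonneg fun y hy => div_nonneg (sq_nonneg _) (hφs y hy)
  have hCS : Δ y₀ ^ 2 ≤ (∑ y ∈ s, phi lam c (r y)) * X := by
    rw [← neg_sq, ← hΔs]
    refine Finset.sum_sq_le_sum_mul_sum_of_sq_le_mul s hφs
      (fun y hy => div_nonneg (sq_nonneg _) (hφs y hy)) fun y hy => ?_
    rcases eq_or_ne (Δ y) 0 with h | h
    · simp [h]
    · rw [mul_div_cancel₀ _ (phi_pos hc ha (hsupp y h) (hsmall_s y hy)).ne']
  rw [← Finset.add_sum_erase _ _ (Finset.mem_univ y₀)]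
  rcases (hφ₀.trans' (Finset.sum_nonneg hφs)).lt_or_eq with hneg | hzero
  · have hneg : phi lam c (r y₀) < 0 := by linarith
    have : -X ≤ Δ y₀ ^ 2 / phi lam c (r y₀) :=
      (le_div_iff_of_neg hneg).2 (by nlinarith [mul_le_mul_of_nonneg_right hφ₀ hX])
    linarith
  · rw [show phi lam c (r y₀) = 0 by linarith, div_zero, zero_add]
    exact hX

theorem sum_sq_div_potts_le (hc : 0 < c) (ha : 0 ≤ lam + c) (hr0 : ∀ y, 0 ≤ r y)
    (hr1 : ∑ y, r y = 1) (hΔ : ∑ y, Δ y = 0) (hsupp : ∀ y, Δ y ≠ 0 → 0 < r y) :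
    ∑ y, lam ^ 2 * Δ y ^ 2 / (lam * r y + c) ≤
      lam ^ 2 / (lam + 2 * c) * ∑ y, Δ y ^ 2 / r y := by
  have hτ : 0 < lam + 2 * c := by linarith
  have hgap : ∀ y, lam ^ 2 / (lam + 2 * c) * (Δ y ^ 2 / r y) -
      lam ^ 2 * Δ y ^ 2 / (lam * r y + c) =
        lam ^ 2 * c / (lam + 2 * c) * (Δ y ^ 2 / phi lam c (r y)) := by
    intro y
    rcases eq_or_ne (Δ y) 0 with h | h
    · simp [h]
    have hu := mul_add_pos_of_lt_one hc ha (hr0 y)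
      (lt_one_of_ne_zero_of_sum_eq_zero hr0 hr1 hΔ (fun y h => (hsupp y h).ne') h)
    calc _ = Δ y ^ 2 * (lam ^ 2 / (lam + 2 * c) / r y - lam ^ 2 / (lam * r y + c)) := by ring
      _ = _ := by rw [eta_div_sub_div_eq hτ.ne' (hsupp y h).ne' hu.ne']; ring
  rw [← sub_nonneg, Finset.mul_sum, ← Finset.sum_sub_distrib,
    Finset.sum_congr rfl fun y _ => hgap y, ← Finset.mul_sum]
  exact mul_nonneg (by positivity) (sum_sq_div_phi_nonneg hc ha hr0 hr1 hΔ hsupp)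

end ChiSquareContraction

section Potts

variable {lam c : ℝ} {P Q : Fin k → ℝ}

lemma pos_of_ne_of_absCont (hQ0 : ∀ i, 0 ≤ Q i) (hac : ∀ i, Q i = 0 → P i = 0) {i : Fin k}
    (hi : P i ≠ Q i) : 0 < Q i :=
  (hQ0 i).lt_of_ne' fun h => hi (by rw [h, hac i h])

theorem klDiv'_affine_le (hc : 0 < c) (ha : 0 ≤ lam + c) (hP0 : ∀ i, 0 ≤ P i)
    (hP1 : ∑ i, P i = 1) (hQ0 : ∀ i, 0 ≤ Q i) (hQ1 : ∑ i, Q i = 1)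
    (hac : ∀ i, Q i = 0 → P i = 0) :
    klDiv' k (fun i => lam * P i + c) (fun i => lam * Q i + c) ≤
      lam ^ 2 / (lam + 2 * c) * klDiv' k P Q := by
  have hq : ∀ i, P i ≠ Q i → 0 < Q i := fun i => pos_of_ne_of_absCont hQ0 hac
  have hΔ : ∑ i, (P i - Q i) = 0 := by rw [Finset.sum_sub_distrib, hP1, hQ1, sub_self]
  have hQlt : ∀ i, P i ≠ Q i → Q i < 1 := fun i h =>
    lt_one_of_ne_zero_of_sum_eq_zero hQ0 hQ1 hΔ (fun j hj => (hq j (sub_ne_zero.1 hj)).ne')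
      (sub_ne_zero.2 h)
  refine klDiv'_le_of_chiSq_le hq hP0 (by rw [hP1, hQ1]) (fun i h => ?_) (fun i => ?_) ?_
    fun t ht => ?_
  · exact mul_add_pos_of_lt_one hc ha (hQ0 i) (hQlt i fun h' => h (by rw [h']))
  · exact mul_add_nonneg_of_le_one hc.le ha (hP0 i)
      (hP1 ▸ Finset.single_le_sum (fun j _ => hP0 j) (Finset.mem_univ i))
  · simp [Finset.sum_add_distrib, ← Finset.mul_sum, hP1, hQ1]
  · have hr0 : ∀ i, 0 ≤ Q i + t * (P i - Q i) := fun i => by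
      nlinarith [hQ0 i, hP0 i, ht.1, ht.2]
    have hr1 : ∑ i, (Q i + t * (P i - Q i)) = 1 := by
      rw [Finset.sum_add_distrib, ← Finset.mul_sum, hΔ, hQ1, mul_zero, add_zero]
    refine (Finset.sum_congr rfl fun i _ => by ring).trans_le
      (sum_sq_div_potts_le hc ha hr0 hr1 hΔ fun i h => ?_)
    exact segment_pos hq hP0 (sub_ne_zero.1 h) ht.1.le ht.2

lemma neg_one_le_sub_one_mul (hk : 2 ≤ k) (hlam : -(1 / ((k : ℝ) - 1)) ≤ lam) :
    -1 ≤ ((k : ℝ) - 1) * lam := by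
  have hk1 : (0 : ℝ) < k - 1 := by
    have : (2 : ℝ) ≤ k := by exact_mod_cast hk
    linarith
  have := mul_le_mul_of_nonneg_left hlam hk1.le
  rwa [mul_neg, mul_one_div_cancel hk1.ne'] at this

lemma potts_lam_add_nonneg (hk : 2 ≤ k) (hlam : -(1 / ((k : ℝ) - 1)) ≤ lam) :
    0 ≤ lam + (1 - lam) / k := by
  have hk0 : (0 : ℝ) < k := by positivity
  rw [show lam + (1 - lam) / k = (((k : ℝ) - 1) * lam + 1) / k by field_simp; ring]
  exact div_nonneg (by linarith [neg_one_le_sub_one_mul hk hlam]) hk0.le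

lemma potts_denom_pos (hk : 2 ≤ k) (hlam : -(1 / ((k : ℝ) - 1)) ≤ lam) :
    0 < ((k : ℝ) - 2) * lam + 2 := by
  have hk2 : (2 : ℝ) ≤ k := by exact_mod_cast hk
  have h := neg_one_le_sub_one_mul hk hlam
  rcases le_or_gt 0 lam with hl | hl <;> nlinarith

end Potts

section TwoPoint

noncomputable def pairKL (m s : ℝ) : ℝ :=
  (m + s) * log ((m + s) / m) + (m - s) * log ((m - s) / m)

variable {m : ℝ}

lemma pairKL_zero : pairKL m 0 = 0 := by simp [pairKL]

lemma pairKL_eq (hm : m ≠ 0) (s : ℝ) :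
    pairKL m s = (m + s) * log (m + s) + (m - s) * log (m - s) - 2 * m * log m := by
  rw [pairKL, mul_log_div_eq hm, mul_log_div_eq hm]
  ring

lemma continuous_pairKL (hm : m ≠ 0) : Continuous (pairKL m) := by
  simp only [funext (pairKL_eq hm)]
  exact ((continuous_mul_log.comp (by fun_prop)).add (continuous_mul_log.comp (by fun_prop))).sub
    continuous_const

lemma hasDerivAt_pairKL (hm : m ≠ 0) {s : ℝ} (hadd : m + s ≠ 0) (hsub : m - s ≠ 0) :
    HasDerivAt (pairKL m) (log (m + s) - log (m - s)) s := by
  simp only [funext (pairKL_eq hm)]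
  refine ((((hasDerivAt_mul_log hadd).comp s ((hasDerivAt_id s).const_add m)).add
    ((hasDerivAt_mul_log hsub).comp s ((hasDerivAt_id s).const_sub m))).sub_const _).congr_deriv ?_
  simp
  ring

theorem tendsto_pairKL_div_sq (hm : 0 < m) (μ : ℝ) :
    Tendsto (fun t => pairKL m (μ * t) / t ^ 2) (𝓝[>] 0) (𝓝 (μ ^ 2 / m)) := by
  have hpos : ∀ᶠ t in 𝓝[>] (0 : ℝ), 0 < m + μ * t ∧ 0 < m - μ * t := by
    have hadd : Tendsto (fun t => m + μ * t) (𝓝 0) (𝓝 m) :=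
      (by fun_prop : Continuous fun t : ℝ => m + μ * t).tendsto' 0 m (by simp)
    have hsub : Tendsto (fun t => m - μ * t) (𝓝 0) (𝓝 m) :=
      (by fun_prop : Continuous fun t : ℝ => m - μ * t).tendsto' 0 m (by simp)
    exact nhdsWithin_le_nhds ((hadd.eventually_const_lt hm).and (hsub.eventually_const_lt hm))
  have hlin : ∀ t, HasDerivAt (fun t => μ * t) μ t := fun t => by
    simpa using (hasDerivAt_id t).const_mul μ
  have hlog_add : ∀ t, 0 < m + μ * t →
      HasDerivAt (fun t => log (m + μ * t)) (μ / (m + μ * t)) t := fun t h => by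
    simpa [div_eq_inv_mul] using ((hlin t).const_add m).log h.ne'
  have hlog_sub : ∀ t, 0 < m - μ * t →
      HasDerivAt (fun t => log (m - μ * t)) (-μ / (m - μ * t)) t := fun t h => by
    simpa [div_eq_inv_mul] using ((hlin t).const_sub m).log h.ne'
  refine HasDerivAt.lhopital_zero_nhdsGT
    (f' := fun t => μ * (log (m + μ * t) - log (m - μ * t))) (g' := fun t => 2 * t)
    ?_ ?_ ?_ ?_ ?_ ?_
  · filter_upwards [hpos] with t ht
    refine ((hasDerivAt_pairKL hm.ne' ht.1.ne' ht.2.ne').comp t (hlin t)).congr_deriv ?_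
    ring
  · exact Eventually.of_forall fun t => by simpa using hasDerivAt_pow 2 t
  · filter_upwards [self_mem_nhdsWithin] with t (ht : 0 < t)
    positivity
  · exact tendsto_nhdsWithin_of_tendsto_nhds
      (((continuous_pairKL hm.ne').comp (by fun_prop)).tendsto' 0 0 (by simp [pairKL_zero]))
  · exact tendsto_nhdsWithin_of_tendsto_nhds
      ((by fun_prop : Continuous fun t : ℝ => t ^ 2).tendsto' 0 0 (by simp))
  refine HasDerivAt.lhopital_zero_nhdsGT
    (f' := fun t => μ * (μ / (m + μ * t) - -μ / (m - μ * t))) (g' := fun _ => 2)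
    ?_ ?_ ?_ ?_ ?_ ?_
  · filter_upwards [hpos] with t ht
    exact ((hlog_add t ht.1).sub (hlog_sub t ht.2)).const_mul μ
  · exact Eventually.of_forall fun t => by simpa using (hasDerivAt_id t).const_mul 2
  · exact Eventually.of_forall fun _ => two_ne_zero
  · have h : ContinuousAt (fun t => μ * (log (m + μ * t) - log (m - μ * t))) 0 := by
      fun_prop (disch := simp [hm.ne'])
    simpa using tendsto_nhdsWithin_of_tendsto_nhds h.tendsto
  · exact tendsto_nhdsWithin_of_tendsto_nhds
      ((by fun_prop : Continuous fun t : ℝ => 2 * t).tendsto' 0 0 (by simp))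
  have h : ContinuousAt (fun t => μ * (μ / (m + μ * t) - -μ / (m - μ * t)) / 2) 0 := by
    fun_prop (disch := simp [hm.ne'])
  convert tendsto_nhdsWithin_of_tendsto_nhds h.tendsto using 2
  field_simp [hm.ne']
  ring

variable {a b : Fin k}

noncomputable def twoPoint (a b : Fin k) (t : ℝ) : Fin k → ℝ :=
  fun i => if i = a then 1 / 2 + t else if i = b then 1 / 2 - t else 0

lemma twoPoint_of_ne {i : Fin k} (ha : i ≠ a) (hb : i ≠ b) (t : ℝ) :
    twoPoint a b t i = 0 := by
  simp [twoPoint, ha, hb]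

lemma twoPoint_nonneg {t : ℝ} (ht : |t| ≤ 1 / 2) (i : Fin k) : 0 ≤ twoPoint a b t i := by
  obtain ⟨h1, h2⟩ := abs_le.1 ht
  unfold twoPoint
  split_ifs <;> linarith

lemma sum_twoPoint (hab : a ≠ b) (t : ℝ) : ∑ i, twoPoint a b t i = 1 := by
  rw [Fintype.sum_eq_add a b hab fun i hi => twoPoint_of_ne hi.1 hi.2 t]
  simp [twoPoint, hab.symm]
  norm_num

lemma twoPoint_eq_zero {i : Fin k} (h : twoPoint a b 0 i = 0) (t : ℝ) :
    twoPoint a b t i = 0 := by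
  by_cases ha : i = a
  · simp [twoPoint, ha] at h
  by_cases hb : i = b
  · simp [twoPoint, hb] at h
  exact twoPoint_of_ne ha hb t

lemma twoPoint_ne {t : ℝ} (ht : t ≠ 0) : twoPoint a b t ≠ twoPoint a b 0 := fun h => by
  simpa [twoPoint, ht] using congrFun h a

lemma klDiv'_eq_add_of_eq {P Q : Fin k → ℝ} (hab : a ≠ b)
    (h : ∀ i, i ≠ a → i ≠ b → P i = Q i) :
    klDiv' k P Q = P a * log (P a / Q a) + P b * log (P b / Q b) :=
  Fintype.sum_eq_add a b hab fun i hi => by rw [h i hi.1 hi.2, mul_log_div_self]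

lemma klDiv'_twoPoint (hab : a ≠ b) (t : ℝ) :
    klDiv' k (twoPoint a b t) (twoPoint a b 0) = pairKL (1 / 2) t := by
  rw [klDiv'_eq_add_of_eq hab fun i ha hb => by simp only [twoPoint_of_ne ha hb]]
  simp [twoPoint, hab.symm, pairKL]

lemma klDiv'_pottsChannel_twoPoint (hab : a ≠ b) (lam t : ℝ) :
    klDiv' k (pottsChannel k lam (twoPoint a b t)) (pottsChannel k lam (twoPoint a b 0)) =
      pairKL (lam / 2 + (1 - lam) / k) (lam * t) := by
  rw [klDiv'_eq_add_of_eq hab fun i ha hb => by simp [pottsChannel, twoPoint_of_ne ha hb]]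
  simp only [pottsChannel, twoPoint, if_pos, if_neg hab.symm, pairKL]
  ring_nf

end TwoPoint

section Ratios

def pottsKLRatios (k : ℕ) (lam : ℝ) : Set ℝ :=
  {r : ℝ | ∃ P Q : Fin k → ℝ,
    (∀ i, 0 ≤ P i) ∧ (∑ i, P i = 1) ∧
    (∀ i, 0 ≤ Q i) ∧ (∑ i, Q i = 1) ∧
    (∀ i, Q i = 0 → P i = 0) ∧ P ≠ Q ∧
    r = klDiv' k (pottsChannel k lam P) (pottsChannel k lam Q) / klDiv' k P Q}

variable {lam : ℝ}

theorem le_of_mem_pottsKLRatios (hk : 2 ≤ k) (hlam : lam ∈ Icc (-(1 / ((k : ℝ) - 1))) 1)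
    {r : ℝ} (hr : r ∈ pottsKLRatios k lam) :
    r ≤ (k : ℝ) * lam ^ 2 / (((k : ℝ) - 2) * lam + 2) := by
  obtain ⟨P, Q, hP0, hP1, hQ0, hQ1, hac, -, rfl⟩ := hr
  have hk0 : (0 : ℝ) < k := by positivity
  rcases hlam.2.lt_or_eq with hlt | rfl
  · have hc : 0 < (1 - lam) / k := div_pos (by linarith) hk0
    have hη : (k : ℝ) * lam ^ 2 / (((k : ℝ) - 2) * lam + 2) =
        lam ^ 2 / (lam + 2 * ((1 - lam) / k)) := by
      rw [show lam + 2 * ((1 - lam) / k) = (((k : ℝ) - 2) * lam + 2) / k by field_simp; ring,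
        div_div_eq_mul_div]
      ring
    have hD := klDiv'_nonneg (fun i => pos_of_ne_of_absCont hQ0 hac) hP0 (by rw [hP1, hQ1])
    rcases hD.eq_or_lt with h | h
    · rw [← h, div_zero]
      exact div_nonneg (by positivity) (potts_denom_pos hk hlam.1).le
    · rw [div_le_iff₀ h, hη]
      exact klDiv'_affine_le hc (potts_lam_add_nonneg hk hlam.1) hP0 hP1 hQ0 hQ1 hac
  · have hid : ∀ X, pottsChannel k 1 X = X := fun X => by funext; simp [pottsChannel]
    rw [hid, hid, one_pow, mul_one, mul_one, sub_add_cancel, div_self hk0.ne']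
    exact div_self_le_one _

theorem exists_gt_mem_pottsKLRatios (hk : 2 ≤ k) (hm : 0 < lam / 2 + (1 - lam) / k) {w : ℝ}
    (hw : w < lam ^ 2 / (2 * (lam / 2 + (1 - lam) / k))) :
    ∃ r ∈ pottsKLRatios k lam, w < r := by
  set m := lam / 2 + (1 - lam) / k
  obtain ⟨a, b, hab⟩ : ∃ a b : Fin k, a ≠ b :=
    ⟨⟨0, by omega⟩, ⟨1, by omega⟩, by simp [Fin.ext_iff]⟩
  have hlim : Tendsto (fun t => pairKL m (lam * t) / pairKL (1 / 2) t) (𝓝[>] 0)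
      (𝓝 (lam ^ 2 / (2 * m))) := by
    have h := (tendsto_pairKL_div_sq hm lam).div (tendsto_pairKL_div_sq one_half_pos 1)
      (by norm_num)
    rw [show lam ^ 2 / m / (1 ^ 2 / (1 / 2)) = lam ^ 2 / (2 * m) by field_simp] at h
    refine h.congr' ?_
    filter_upwards [self_mem_nhdsWithin] with t (ht : 0 < t)
    simp only [Pi.div_apply, one_mul, div_div_div_cancel_right₀ (pow_ne_zero 2 ht.ne')]
  obtain ⟨t, hwt, ht0, ht1⟩ :=
    ((hlim.eventually_const_lt hw).and (Ioo_mem_nhdsGT (by norm_num : (0 : ℝ) < 1 / 4))).exists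
  refine ⟨_, ⟨twoPoint a b t, twoPoint a b 0, twoPoint_nonneg ?_, sum_twoPoint hab t,
    twoPoint_nonneg (by norm_num), sum_twoPoint hab 0, fun i hi => twoPoint_eq_zero hi t,
    twoPoint_ne ht0.ne', rfl⟩, ?_⟩
  · rw [abs_of_pos ht0]
    linarith
  · rwa [klDiv'_pottsChannel_twoPoint hab, klDiv'_twoPoint hab]

end Ratios

end PottsEta

open PottsEta in
/-- Input-unrestricted KL contraction coefficient of the Potts channel:
`η_KL(PC_λ) = kλ²/((k−2)λ+2)`. -/
theorem potts_eta_KL_unrestricted (k : ℕ) (hk : 2 ≤ k)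
    (lam : ℝ) (hlam : lam ∈ Set.Icc (-(1 / ((k : ℝ) - 1))) 1) :
    sSup {r : ℝ | ∃ P Q : Fin k → ℝ,
        (∀ i, 0 ≤ P i) ∧ (∑ i, P i = 1) ∧
        (∀ i, 0 ≤ Q i) ∧ (∑ i, Q i = 1) ∧
        (∀ i, Q i = 0 → P i = 0) ∧ P ≠ Q ∧
        r = klDiv' k (pottsChannel k lam P) (pottsChannel k lam Q) / klDiv' k P Q}
      = (k : ℝ) * lam ^ 2 / (((k : ℝ) - 2) * lam + 2) := by
  change sSup (pottsKLRatios k lam) = _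
  have hm : lam / 2 + (1 - lam) / k = (((k : ℝ) - 2) * lam + 2) / (2 * k) := by
    field_simp
    ring
  have hη : (k : ℝ) * lam ^ 2 / (((k : ℝ) - 2) * lam + 2) =
      lam ^ 2 / (2 * (lam / 2 + (1 - lam) / k)) := by
    rw [hm]
    field_simp
  have hm_pos : 0 < lam / 2 + (1 - lam) / k :=
    hm ▸ div_pos (potts_denom_pos hk hlam.1) (by positivity)
  refine csSup_eq_of_forall_le_of_forall_lt_exists_gt ?_
    (fun r hr => le_of_mem_pottsKLRatios hk hlam hr)
    fun w hw => exists_gt_mem_pottsKLRatios hk hm_pos (hη ▸ hw)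
  obtain ⟨r, hr, -⟩ := exists_gt_mem_pottsKLRatios hk hm_pos (sub_one_lt _)
  exact ⟨r, hr⟩
end

section
/- Let k ≥ 2 be an integer. For every probability distribution P = (p_1,…,p_k) on [k] and every function f : [k] → ℝ satisfying Σ_{i=1}^k f_i·p_i = 0 and Σ_{i=1}^k f_i²·p_i = 1, one has Σ_{i=1}^k f_i² − (1/(k−1))·(Σ_{i=1}^k f_i)² ≥ 2. -/
/-!
Let `a` and `b` be points where `f` attains its maximum and minimum. Integrating the nonnegative
function `(f a - f) (f - f b)` against `P` gives `f a * f b ≤ -1`; in particular `a ≠ b`.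
Merging the two coordinates `a` and `b` into one, of value `f a + f b`, keeps `∑ fᵢ` and raises
`∑ fᵢ²` by `2 f a f b ≤ -2`; Cauchy–Schwarz over the remaining `k - 1` coordinates concludes.
-/

open Finset

variable {ι : Type*} [Fintype ι]

theorem mul_le_neg_sum_sq_mul {P f : ι → ℝ} {M m : ℝ} (hP0 : ∀ i, 0 ≤ P i) (hP1 : ∑ i, P i = 1)
    (hf1 : ∑ i, f i * P i = 0) (hM : ∀ i, f i ≤ M) (hm : ∀ i, m ≤ f i) :
    M * m ≤ -∑ i, f i ^ 2 * P i := by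
  have hnonneg : 0 ≤ ∑ i, (M - f i) * (f i - m) * P i :=
    sum_nonneg fun i _ => mul_nonneg (mul_nonneg (by linarith [hM i]) (by linarith [hm i])) (hP0 i)
  have hexpand : ∑ i, (M - f i) * (f i - m) * P i =
      (M + m) * ∑ i, f i * P i - M * m * ∑ i, P i - ∑ i, f i ^ 2 * P i := by
    simp only [mul_sum, ← sum_sub_distrib]
    exact sum_congr rfl fun i _ => by ring
  rw [hexpand, hf1, hP1] at hnonneg
  linarith

theorem sq_sum_le_card_sub_one_mul [DecidableEq ι] (f : ι → ℝ) {a b : ι} (hab : a ≠ b) :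
    (∑ i, f i) ^ 2 ≤ (Fintype.card ι - 1) * (∑ i, f i ^ 2 + 2 * (f a * f b)) := by
  set g := f + Pi.single a (f b)
  have ha : a ∈ univ.erase b := mem_erase.mpr ⟨hab, mem_univ a⟩
  have hcard : ((univ.erase b).card : ℝ) = Fintype.card ι - 1 := by
    rw [card_erase_of_mem (mem_univ b), card_univ,
      Nat.cast_pred (Fintype.card_pos_iff.mpr ⟨b⟩)]
  have hsum : ∑ i ∈ univ.erase b, g i = ∑ i, f i := by
    simp only [g, Pi.add_apply, sum_add_distrib, sum_pi_single', if_pos ha]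
    exact sum_erase_add _ _ (mem_univ b)
  have hsum_sq : ∑ i ∈ univ.erase b, g i ^ 2 = ∑ i, f i ^ 2 + 2 * (f a * f b) := by
    have hg_sq : ∀ i, g i ^ 2 = f i ^ 2 + (Pi.single a (2 * f a * f b + f b ^ 2) : ι → ℝ) i := by
      intro i
      rcases eq_or_ne i a with rfl | hi
      · simp only [g, Pi.add_apply, Pi.single_eq_same]; ring
      · simp [g, Pi.single_eq_of_ne hi]
    simp only [hg_sq, sum_add_distrib, sum_pi_single', if_pos ha]
    rw [← sum_erase_add _ _ (mem_univ b)]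
    ring
  simpa only [hsum, hsum_sq, hcard] using sq_sum_le_card_mul_sum_sq (s := univ.erase b) (f := g)

theorem claim_ineq_general (k : ℕ)
    (P : Fin k → ℝ) (hP0 : ∀ i, 0 ≤ P i) (hP1 : ∑ i, P i = 1)
    (f : Fin k → ℝ) (hf1 : ∑ i, f i * P i = 0) (hf2 : ∑ i, f i ^ 2 * P i = 1) :
    2 ≤ (∑ i, f i ^ 2) - (1 / ((k : ℝ) - 1)) * (∑ i, f i) ^ 2 := by
  have hne : (univ : Finset (Fin k)).Nonempty :=
    nonempty_of_sum_ne_zero (by rw [hP1]; exact one_ne_zero)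
  obtain ⟨a, -, ha⟩ := exists_max_image univ f hne
  obtain ⟨b, -, hb⟩ := exists_min_image univ f hne
  have hab_le : f a * f b ≤ -1 := by
    simpa only [hf2] using
      mul_le_neg_sum_sq_mul hP0 hP1 hf1 (fun i => ha i (mem_univ i)) (fun i => hb i (mem_univ i))
  have hab : a ≠ b := by
    rintro rfl
    nlinarith [mul_self_nonneg (f a)]
  have hk : (0 : ℝ) < k - 1 := by
    have := Fintype.one_lt_card_iff_nontrivial.mpr ⟨⟨a, b, hab⟩⟩
    rw [Fintype.card_fin] at this
    rw [sub_pos]; exact_mod_cast this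
  have hCS := sq_sum_le_card_sub_one_mul f hab
  rw [Fintype.card_fin] at hCS
  rw [one_div_mul_eq_div, le_sub_iff_add_le, ← le_sub_iff_add_le', div_le_iff₀ hk]
  nlinarith

/-- For any distribution `P` on `[k]` and any `f` with `∑ fᵢpᵢ = 0` and `∑ fᵢ²pᵢ = 1`,
one has `∑ fᵢ² − (1/(k−1))·(∑ fᵢ)² ≥ 2`. -/
theorem claim_ineq (k : ℕ) (hk : 2 ≤ k)
    (P : Fin k → ℝ) (hP0 : ∀ i, 0 ≤ P i) (hP1 : ∑ i, P i = 1)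
    (f : Fin k → ℝ) (hf1 : ∑ i, f i * P i = 0) (hf2 : ∑ i, f i ^ 2 * P i = 1) :
    2 ≤ (∑ i, f i ^ 2) - (1 / ((k : ℝ) - 1)) * (∑ i, f i) ^ 2 :=
  claim_ineq_general k P hP0 hP1 f hf1 hf2
end
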